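/- arXiv:0907.2984 — 3 statements merged into one kernel-verified Lean document; each statement's English description precedes it below -/
import Mathlib

section
/- Define E_Fc(R) = sup over input distributions p_X, r_o ∈ [R/C, 1] and ρ ∈ [0,1] of (1−r_o)( −ρ R/r_o + E_0(ρ, p_X) [ 1 − ((1+r_o)/2) E_0(ρ, p_X) ] ) and Ẽ_Fc(R) = sup over the same set of (1−r_o)( −ρ R/r_o + E_0(ρ, p_X) [ 1 − E_0(ρ, p_X) ] ). Then the lower bound Ẽ_Fc is asymptotically tight at capacity: lim_{R → C⁻} Ẽ_Fc(R) / E_Fc(R) = 1. -/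
open scoped BigOperators ENNReal Classical Topology
open MeasureTheory Real Filter

/-- A discrete memoryless channel with finite input alphabet `X` and output alphabet `Y`. -/
structure DMC (X Y : Type) [Fintype X] [Fintype Y] where
  p : X → Y → ℝ
  nonneg : ∀ x y, 0 ≤ p x y
  sum_one : ∀ x, ∑ y, p x y = 1

/-- An input distribution on the finite alphabet `X`. -/
def InputDist (X : Type) [Fintype X] : Type :=
  {q : X → ℝ // (∀ x, 0 ≤ q x) ∧ ∑ x, q x = 1}

/-- Gallager's function `E_0(ρ, p_X)`. -/
noncomputable def E0 {X Y : Type} [Fintype X] [Fintype Y]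
    (ch : DMC X Y) (ρ : ℝ) (q : X → ℝ) : ℝ :=
  - Real.log (∑ y, (∑ x, q x * ch.p x y ^ (1 / (1 + ρ))) ^ (1 + ρ))

/-- Mutual information `I(p_X)` between channel input and output. -/
noncomputable def mutInfo {X Y : Type} [Fintype X] [Fintype Y]
    (ch : DMC X Y) (q : X → ℝ) : ℝ :=
  ∑ x, ∑ y, if q x * ch.p x y = 0 then 0
    else q x * ch.p x y * Real.log (ch.p x y / ∑ x', q x' * ch.p x' y)

/-- The (fountain) capacity `C = max_{p_X} I(p_X)`. -/
noncomputable def capacity {X Y : Type} [Fintype X] [Fintype Y] (ch : DMC X Y) : ℝ :=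
  sSup (Set.range fun q : InputDist X => mutInfo ch q.1)

/-- The one-level concatenated fountain error exponent `E_Fc(R)`. -/
noncomputable def EFc {X Y : Type} [Fintype X] [Fintype Y] (ch : DMC X Y) (R : ℝ) : ℝ :=
  sSup {e : ℝ | ∃ q : InputDist X, ∃ ro ∈ Set.Icc (R / capacity ch) 1,
    ∃ ρ ∈ Set.Icc (0:ℝ) 1,
    e = (1 - ro) * (-ρ * (R / ro) +
          E0 ch ρ q.1 * (1 - (1 + ro) / 2 * E0 ch ρ q.1))}

/-- The lower bound `Ẽ_Fc(R)`. -/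
noncomputable def tildeEFc {X Y : Type} [Fintype X] [Fintype Y] (ch : DMC X Y) (R : ℝ) : ℝ :=
  sSup {e : ℝ | ∃ q : InputDist X, ∃ ro ∈ Set.Icc (R / capacity ch) 1,
    ∃ ρ ∈ Set.Icc (0:ℝ) 1,
    e = (1 - ro) * (-ρ * (R / ro) + E0 ch ρ q.1 * (1 - E0 ch ρ q.1))}

namespace FountainAux

open Finset

/-- key elementary exponential bound -/
lemma exp_quad {w L : ℝ} (hL : 0 ≤ L) (hw : w ≤ L) :
    Real.exp w ≤ 1 + w + w ^ 2 * Real.exp L := by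
  have hL1 : (1:ℝ) ≤ Real.exp L := Real.one_le_exp hL
  have hE : (0:ℝ) < Real.exp w := Real.exp_pos w
  have hF1 : 1 - w ≤ Real.exp (-w) := by
    have := Real.add_one_le_exp (-w); linarith
  have hEF : Real.exp w * Real.exp (-w) = 1 := by
    rw [← Real.exp_add]; simp
  rcases le_or_gt w 0 with h | h
  · have hpos : (0:ℝ) < 1 - w := by linarith
    have h2 : Real.exp w * (1 - w) ≤ 1 := by
      have h4 : Real.exp w * (1 - w) ≤ Real.exp w * Real.exp (-w) :=
        mul_le_mul_of_nonneg_left hF1 hE.le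
      linarith [h4.trans hEF.le]
    have h5 : Real.exp w ≤ 1 + w + w ^ 2 := by nlinarith [sq_nonneg w]
    nlinarith [sq_nonneg w]
  · have hF2 : Real.exp (-w) ≤ 1 := Real.exp_le_one_iff.mpr (by linarith)
    have hwE : Real.exp w ≤ Real.exp L := Real.exp_le_exp.mpr hw
    have k0 : 1 - Real.exp (-w) - w * Real.exp (-w) ≤ w * w := by nlinarith
    have k1 : Real.exp w * (1 - Real.exp (-w) - w * Real.exp (-w)) ≤ Real.exp w * (w * w) :=
      mul_le_mul_of_nonneg_left k0 hE.le
    have k2 : 0 ≤ w ^ 2 * (Real.exp L - Real.exp w) :=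
      mul_nonneg (sq_nonneg w) (by linarith)
    nlinarith [k1, hEF, k2]

/-- `x * (log x)^2 ≤ 4` for `0 < x ≤ 1`. -/
lemma mul_sq_log_le {x : ℝ} (h0 : 0 < x) (h1 : x ≤ 1) : x * Real.log x ^ 2 ≤ 4 := by
  have hr0 : 0 < Real.sqrt x := Real.sqrt_pos.mpr h0
  have hr1 : Real.sqrt x ≤ 1 := by
    rw [show (1:ℝ) = Real.sqrt 1 by simp]; exact Real.sqrt_le_sqrt h1
  have habs : |Real.log (Real.sqrt x) * Real.sqrt x| < 1 :=
    Real.abs_log_mul_self_lt _ hr0 hr1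
  have hlog : Real.log x = 2 * Real.log (Real.sqrt x) := by
    rw [Real.log_sqrt h0.le]; ring
  have hsq : Real.sqrt x * Real.sqrt x = x := Real.mul_self_sqrt h0.le
  have h2 : (Real.log (Real.sqrt x) * Real.sqrt x) ^ 2 ≤ 1 := by
    have := sq_abs (Real.log (Real.sqrt x) * Real.sqrt x)
    nlinarith [habs, abs_nonneg (Real.log (Real.sqrt x) * Real.sqrt x)]
  have key : x * Real.log x ^ 2 = 4 * (Real.log (Real.sqrt x) * Real.sqrt x) ^ 2 := by
    rw [hlog]; linear_combination (4 * Real.log (Real.sqrt x) ^ 2) * hsq.symm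
  linarith

variable {X Y : Type} [Fintype X] [Fintype Y]

lemma p_le_one (ch : DMC X Y) (x : X) (y : Y) : ch.p x y ≤ 1 := by
  have h := ch.sum_one x
  have h2 := Finset.single_le_sum (f := fun y => ch.p x y)
    (fun i _ => ch.nonneg x i) (mem_univ y)
  linarith

section pmin

noncomputable def posEntries (ch : DMC X Y) : Finset (X × Y) :=
  univ.filter fun z => 0 < ch.p z.1 z.2

lemma posEntries_nonempty [Nonempty X] (ch : DMC X Y) : (posEntries ch).Nonempty := by
  obtain ⟨x⟩ := ‹Nonempty X›
  have h := ch.sum_one x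
  have hex : ∃ y, 0 < ch.p x y := by
    by_contra hc
    push_neg at hc
    have hz : ∀ y ∈ (univ : Finset Y), ch.p x y = 0 :=
      fun y _ => le_antisymm (hc y) (ch.nonneg x y)
    rw [Finset.sum_eq_zero hz] at h
    norm_num at h
  obtain ⟨y, hy⟩ := hex
  exact ⟨(x, y), by simp [posEntries, hy]⟩

variable [Nonempty X]

noncomputable def pmin (ch : DMC X Y) : ℝ :=
  (posEntries ch).inf' (posEntries_nonempty ch) fun z => ch.p z.1 z.2

lemma pmin_pos (ch : DMC X Y) : 0 < pmin ch := by
  rw [pmin, Finset.lt_inf'_iff]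
  intro z hz
  simpa [posEntries] using (Finset.mem_filter.mp hz).2

lemma pmin_le (ch : DMC X Y) {x : X} {y : Y} (h : 0 < ch.p x y) : pmin ch ≤ ch.p x y :=
by
  have hmem : ((x, y) : X × Y) ∈ posEntries ch := by simp [posEntries, h]
  exact Finset.inf'_le _ hmem

noncomputable def Lam (ch : DMC X Y) : ℝ := - Real.log (pmin ch)

lemma pmin_le_one (ch : DMC X Y) : pmin ch ≤ 1 := by
  obtain ⟨z, hz⟩ := posEntries_nonempty ch
  exact (pmin_le ch (by simpa [posEntries] using (Finset.mem_filter.mp hz).2)).trans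
    (p_le_one ch z.1 z.2)

lemma Lam_nonneg (ch : DMC X Y) : 0 ≤ Lam ch := by
  have := Real.log_nonpos (pmin_pos ch).le (pmin_le_one ch)
  simp only [Lam]; linarith

lemma neg_log_le_Lam (ch : DMC X Y) {x : X} {y : Y} (h : 0 < ch.p x y) :
    - Real.log (ch.p x y) ≤ Lam ch := by
  have := Real.log_le_log (pmin_pos ch) (pmin_le ch h)
  simp only [Lam]; linarith

lemma neg_log_nonneg (ch : DMC X Y) {x : X} {y : Y} (h : 0 < ch.p x y) :
    0 ≤ - Real.log (ch.p x y) := by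
  have := Real.log_nonpos h.le (p_le_one ch x y)
  linarith

end pmin

set_option linter.unusedSectionVars false

section Q

variable (ch : DMC X Y) (q : X → ℝ)

noncomputable def Py (y : Y) : ℝ := ∑ x, q x * ch.p x y
noncomputable def sx (y : Y) : Finset X := univ.filter fun x => q x * ch.p x y ≠ 0
noncomputable def sy : Finset Y := univ.filter fun y => Py ch q y ≠ 0
noncomputable def cE (y : Y) : ℝ :=
  ∑ x ∈ sx ch q y, q x * ch.p x y * (-Real.log (ch.p x y))
noncomputable def aE (y : Y) : ℝ := Real.log (Py ch q y) + cE ch q y / Py ch q y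
noncomputable def Fs (ρ : ℝ) (y : Y) : ℝ := ∑ x, q x * ch.p x y ^ (1/(1+ρ))
noncomputable def gsum (ρ : ℝ) : ℝ := ∑ y, Fs ch q ρ y ^ (1+ρ)

lemma E0_eq (ρ : ℝ) : E0 ch ρ q = - Real.log (gsum ch q ρ) := rfl

variable {ch q}

lemma mem_sx_q (hq0 : ∀ x, 0 ≤ q x) {x : X} {y : Y} (h : x ∈ sx ch q y) : 0 < q x := by
  have h2 : q x * ch.p x y ≠ 0 := by simpa [sx] using h
  rcases lt_or_eq_of_le (hq0 x) with h3 | h3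
  · exact h3
  · exact absurd (by rw [← h3]; ring) h2

lemma mem_sx_p {x : X} {y : Y} (h : x ∈ sx ch q y) : 0 < ch.p x y := by
  have h2 : q x * ch.p x y ≠ 0 := by simpa [sx] using h
  rcases lt_or_eq_of_le (ch.nonneg x y) with h3 | h3
  · exact h3
  · exact absurd (by rw [← h3]; ring) h2

lemma mem_sx_qp (hq0 : ∀ x, 0 ≤ q x) {x : X} {y : Y} (h : x ∈ sx ch q y) :
    0 < q x * ch.p x y :=
  mul_pos (mem_sx_q hq0 h) (mem_sx_p h)

lemma Py_nonneg (hq0 : ∀ x, 0 ≤ q x) (y : Y) : 0 ≤ Py ch q y :=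
  Finset.sum_nonneg fun x _ => mul_nonneg (hq0 x) (ch.nonneg x y)

lemma Py_eq_sum_sx (y : Y) : Py ch q y = ∑ x ∈ sx ch q y, q x * ch.p x y := by
  rw [Py, sx, Finset.sum_filter_of_ne]
  intro x _ h
  exact h

lemma Py_pos_of_mem_sy (hq0 : ∀ x, 0 ≤ q x) {y : Y} (h : y ∈ sy ch q) :
    0 < Py ch q y := by
  have h2 : Py ch q y ≠ 0 := by simpa [sy] using h
  exact lt_of_le_of_ne (Py_nonneg hq0 y) (Ne.symm h2)

lemma sum_Py (hq1 : ∑ x, q x = 1) : ∑ y, Py ch q y = 1 := by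
  simp only [Py]
  rw [Finset.sum_comm]
  simp only [← Finset.mul_sum, ch.sum_one, mul_one]
  exact hq1

lemma sum_sy_Py (hq1 : ∑ x, q x = 1) : ∑ y ∈ sy ch q, Py ch q y = 1 := by
  rw [sy, Finset.sum_filter_of_ne (fun y _ h => h)]
  exact sum_Py hq1

lemma Py_le_one (hq0 : ∀ x, 0 ≤ q x) (hq1 : ∑ x, q x = 1) (y : Y) : Py ch q y ≤ 1 := by
  have h := Finset.single_le_sum (f := fun y => Py ch q y)
    (fun i _ => Py_nonneg hq0 i) (mem_univ y)
  rw [sum_Py hq1] at h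
  exact h

lemma qp_eq_zero_of_not_mem_sy (hq0 : ∀ x, 0 ≤ q x) {y : Y} (h : y ∉ sy ch q) (x : X) :
    q x * ch.p x y = 0 := by
  have h2 : Py ch q y = 0 := by
    by_contra hc
    exact h (by simp [sy, hc])
  rw [Py] at h2
  have := (Finset.sum_eq_zero_iff_of_nonneg
    (fun x _ => mul_nonneg (hq0 x) (ch.nonneg x y))).mp h2
  exact this x (mem_univ x)

lemma sx_eq_empty_of_not_mem_sy (hq0 : ∀ x, 0 ≤ q x) {y : Y} (h : y ∉ sy ch q) :
    sx ch q y = ∅ := by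
  rw [Finset.eq_empty_iff_forall_notMem]
  intro x hx
  have h2 : q x * ch.p x y ≠ 0 := by simpa [sx] using hx
  exact h2 (qp_eq_zero_of_not_mem_sy hq0 h x)

lemma Fs_eq_sum_sx {ρ : ℝ} (hρ : 0 ≤ ρ) (y : Y) :
    Fs ch q ρ y = ∑ x ∈ sx ch q y, q x * ch.p x y ^ (1/(1+ρ)) := by
  have hs : (1 : ℝ)/(1+ρ) ≠ 0 := by positivity
  rw [Fs, sx, Finset.sum_filter_of_ne]
  intro x _ h
  by_contra hc
  rcases mul_eq_zero.mp (not_not.mp (fun hne => hne hc)) with h1 | h1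
  · exact h (by rw [h1, zero_mul])
  · exact h (by rw [h1, Real.zero_rpow hs, mul_zero])

lemma Fs_nonneg (hq0 : ∀ x, 0 ≤ q x) {ρ : ℝ} (y : Y) : 0 ≤ Fs ch q ρ y :=
  Finset.sum_nonneg fun x _ =>
    mul_nonneg (hq0 x) (Real.rpow_nonneg (ch.nonneg x y) _)

lemma Fs_eq_zero_of_not_mem_sy (hq0 : ∀ x, 0 ≤ q x) {ρ : ℝ} (hρ : 0 ≤ ρ) {y : Y}
    (h : y ∉ sy ch q) : Fs ch q ρ y = 0 := by
  rw [Fs_eq_sum_sx hρ y, sx_eq_empty_of_not_mem_sy hq0 h, Finset.sum_empty]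

lemma cE_nonneg [Nonempty X] (hq0 : ∀ x, 0 ≤ q x) (y : Y) : 0 ≤ cE ch q y :=
  Finset.sum_nonneg fun x hx =>
    mul_nonneg (mem_sx_qp hq0 hx).le (neg_log_nonneg ch (mem_sx_p hx))

lemma cE_le [Nonempty X] (hq0 : ∀ x, 0 ≤ q x) (y : Y) :
    cE ch q y ≤ Lam ch * Py ch q y := by
  rw [Py_eq_sum_sx, Finset.mul_sum, cE]
  apply Finset.sum_le_sum
  intro x hx
  rw [mul_comm (Lam ch) _]
  exact mul_le_mul_of_nonneg_left (neg_log_le_Lam ch (mem_sx_p hx)) (mem_sx_qp hq0 hx).le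

lemma mutinfo_eq (hq0 : ∀ x, 0 ≤ q x) : mutInfo ch q =
    ∑ y ∈ sy ch q, (-(cE ch q y) - Py ch q y * Real.log (Py ch q y)) := by
  rw [mutInfo, Finset.sum_comm]
  have step1 : ∀ y : Y, (∑ x, if q x * ch.p x y = 0 then 0
      else q x * ch.p x y * Real.log (ch.p x y / ∑ x', q x' * ch.p x' y)) =
      ∑ x ∈ sx ch q y, q x * ch.p x y * Real.log (ch.p x y / Py ch q y) := by
    intro y
    rw [sx, Finset.sum_filter]
    apply Finset.sum_congr rfl
    intro x _
    by_cases h : q x * ch.p x y = 0 <;> simp [h, Py]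
  simp only [step1]
  rw [← Finset.sum_filter_of_ne (s := univ)
    (p := fun y => Py ch q y ≠ 0) (f := fun y =>
      ∑ x ∈ sx ch q y, q x * ch.p x y * Real.log (ch.p x y / Py ch q y)) ?_]
  · rw [← sy]
    apply Finset.sum_congr rfl
    intro y hy
    have hPy : 0 < Py ch q y := Py_pos_of_mem_sy hq0 hy
    have hsplit : ∀ x ∈ sx ch q y, q x * ch.p x y * Real.log (ch.p x y / Py ch q y)
        = q x * ch.p x y * Real.log (ch.p x y) - q x * ch.p x y * Real.log (Py ch q y) := by
      intro x hx
      rw [Real.log_div (ne_of_gt (mem_sx_p hx)) (ne_of_gt hPy)]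
      ring
    rw [Finset.sum_congr rfl hsplit, Finset.sum_sub_distrib, ← Finset.sum_mul,
      ← Py_eq_sum_sx, cE]
    have hneg : ∑ x ∈ sx ch q y, q x * ch.p x y * Real.log (ch.p x y)
        = - ∑ x ∈ sx ch q y, q x * ch.p x y * (-Real.log (ch.p x y)) := by
      rw [← Finset.sum_neg_distrib]
      apply Finset.sum_congr rfl
      intro x _
      ring
    rw [hneg]
  · intro y _ h
    by_contra hPy
    have hPy' : Py ch q y = 0 := by simpa using hPy
    simp only [sx_eq_empty_of_not_mem_sy hq0 (show y ∉ sy ch q by simp [sy, hPy']),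
      Finset.sum_empty] at h
    exact h rfl

lemma sum_sy_Py_aE (hq0 : ∀ x, 0 ≤ q x) :
    ∑ y ∈ sy ch q, Py ch q y * aE ch q y = - mutInfo ch q := by
  rw [mutinfo_eq hq0, ← Finset.sum_neg_distrib]
  apply Finset.sum_congr rfl
  intro y hy
  have hPy : 0 < Py ch q y := Py_pos_of_mem_sy hq0 hy
  rw [aE]
  field_simp
  ring

lemma aE_le_Lam [Nonempty X] (hq0 : ∀ x, 0 ≤ q x) (hq1 : ∑ x, q x = 1) {y : Y}
    (hy : y ∈ sy ch q) : aE ch q y ≤ Lam ch := by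
  have hPy : 0 < Py ch q y := Py_pos_of_mem_sy hq0 hy
  have h1 : Real.log (Py ch q y) ≤ 0 :=
    Real.log_nonpos hPy.le (Py_le_one hq0 hq1 y)
  have h2 : cE ch q y / Py ch q y ≤ Lam ch := by
    rw [div_le_iff₀ hPy]
    exact cE_le hq0 y
  rw [aE]; linarith

lemma Fs_step_lower (hq0 : ∀ x, 0 ≤ q x) {ρ : ℝ} (hρ : 0 ≤ ρ) {y : Y}
    (hy : y ∈ sy ch q) :
    Py ch q y * Real.exp (ρ * aE ch q y) ≤ Fs ch q ρ y ^ (1+ρ) := by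
  have hPy : 0 < Py ch q y := Py_pos_of_mem_sy hq0 hy
  have h1ρ : (0:ℝ) < 1 + ρ := by linarith
  set e1 : ℝ := 1/(1+ρ) with he1
  have key := Real.geom_mean_le_arith_mean_weighted (sx ch q y)
    (fun x => q x * ch.p x y / Py ch q y) (fun x => ch.p x y ^ (e1 - 1))
    (fun x hx => div_nonneg (mem_sx_qp hq0 hx).le hPy.le)
    (by rw [← Finset.sum_div, ← Py_eq_sum_sx, div_self (ne_of_gt hPy)])
    (fun x hx => Real.rpow_nonneg (ch.nonneg x y) _)
  have hRHS : ∑ x ∈ sx ch q y, (q x * ch.p x y / Py ch q y) * ch.p x y ^ (e1 - 1)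
      = Fs ch q ρ y / Py ch q y := by
    rw [Fs_eq_sum_sx hρ y, Finset.sum_div]
    apply Finset.sum_congr rfl
    intro x hx
    have hp : 0 < ch.p x y := mem_sx_p hx
    have hpe : ch.p x y ^ e1 = ch.p x y * ch.p x y ^ (e1 - 1) := by
      rw [show e1 = 1 + (e1 - 1) by ring, Real.rpow_add hp, Real.rpow_one]
      ring_nf
    rw [hpe]
    ring
  have hLHS : ∏ x ∈ sx ch q y, (ch.p x y ^ (e1 - 1)) ^ (q x * ch.p x y / Py ch q y)
      = Real.exp ((1 - e1) * (cE ch q y / Py ch q y)) := by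
    have hterm : ∀ x ∈ sx ch q y, (ch.p x y ^ (e1 - 1)) ^ (q x * ch.p x y / Py ch q y)
        = Real.exp ((Real.log (ch.p x y) * (e1 - 1)) * (q x * ch.p x y / Py ch q y)) := by
      intro x hx
      have hp : 0 < ch.p x y := mem_sx_p hx
      rw [Real.rpow_def_of_pos hp, Real.rpow_def_of_pos (Real.exp_pos _), Real.log_exp]
    rw [Finset.prod_congr rfl hterm, ← Real.exp_sum]
    congr 1
    have : ∑ x ∈ sx ch q y, (Real.log (ch.p x y) * (e1 - 1)) * (q x * ch.p x y / Py ch q y)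
        = (e1 - 1) / Py ch q y * ∑ x ∈ sx ch q y, q x * ch.p x y * Real.log (ch.p x y) := by
      rw [Finset.mul_sum]
      apply Finset.sum_congr rfl
      intro x _
      ring
    rw [this]
    have hc : ∑ x ∈ sx ch q y, q x * ch.p x y * Real.log (ch.p x y) = - cE ch q y := by
      rw [cE, ← Finset.sum_neg_distrib]
      apply Finset.sum_congr rfl
      intro x _
      ring
    rw [hc]
    ring
  rw [hRHS, hLHS] at key
  have key2 : Py ch q y * Real.exp ((1 - e1) * (cE ch q y / Py ch q y)) ≤ Fs ch q ρ y := by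
    rw [mul_comm]
    exact (le_div_iff₀ hPy).mp key
  have key3 := Real.rpow_le_rpow
    (mul_nonneg hPy.le (Real.exp_pos _).le) key2 h1ρ.le
  calc Py ch q y * Real.exp (ρ * aE ch q y)
      = (Py ch q y * Real.exp ((1 - e1) * (cE ch q y / Py ch q y))) ^ (1+ρ) := by
        rw [Real.mul_rpow hPy.le (Real.exp_pos _).le,
          Real.rpow_def_of_pos (Real.exp_pos _), Real.log_exp]
        rw [show Py ch q y ^ (1+ρ) = Py ch q y ^ (1:ℝ) * Py ch q y ^ ρ by
          rw [← Real.rpow_add hPy], Real.rpow_one,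
          Real.rpow_def_of_pos hPy]
        rw [mul_assoc, ← Real.exp_add]
        congr 1
        rw [aE]
        have he : (1 - e1) * (cE ch q y / Py ch q y) * (1 + ρ) = ρ * (cE ch q y / Py ch q y) := by
          have : (1 - e1) * (1 + ρ) = ρ := by
            rw [he1]
            field_simp
            ring
          linear_combination (cE ch q y / Py ch q y) * this
        rw [he]
        ring
    _ ≤ Fs ch q ρ y ^ (1+ρ) := key3

lemma gsum_ge_exp (hq0 : ∀ x, 0 ≤ q x) (hq1 : ∑ x, q x = 1) {ρ : ℝ} (hρ : 0 ≤ ρ) :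
    Real.exp (-(ρ * mutInfo ch q)) ≤ gsum ch q ρ := by
  have h1 : ∑ y ∈ sy ch q, Fs ch q ρ y ^ (1+ρ) ≤ gsum ch q ρ := by
    rw [gsum]
    apply Finset.sum_le_sum_of_subset_of_nonneg (Finset.subset_univ _)
    intro y _ _
    exact Real.rpow_nonneg (Fs_nonneg hq0 y) _
  have h2 : ∑ y ∈ sy ch q, Py ch q y * Real.exp (ρ * aE ch q y)
      ≤ ∑ y ∈ sy ch q, Fs ch q ρ y ^ (1+ρ) :=
    Finset.sum_le_sum fun y hy => Fs_step_lower hq0 hρ hy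
  have h3 := Real.geom_mean_le_arith_mean_weighted (sy ch q)
    (fun y => Py ch q y) (fun y => Real.exp (ρ * aE ch q y))
    (fun y _ => Py_nonneg hq0 y) (sum_sy_Py hq1)
    (fun y _ => (Real.exp_pos _).le)
  have h4 : ∏ y ∈ sy ch q, Real.exp (ρ * aE ch q y) ^ Py ch q y
      = Real.exp (-(ρ * mutInfo ch q)) := by
    have hterm : ∀ y ∈ sy ch q, Real.exp (ρ * aE ch q y) ^ Py ch q y
        = Real.exp ((ρ * aE ch q y) * Py ch q y) := by
      intro y _
      rw [Real.rpow_def_of_pos (Real.exp_pos _), Real.log_exp]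
    rw [Finset.prod_congr rfl hterm, ← Real.exp_sum]
    congr 1
    have : ∑ y ∈ sy ch q, (ρ * aE ch q y) * Py ch q y
        = ρ * ∑ y ∈ sy ch q, Py ch q y * aE ch q y := by
      rw [Finset.mul_sum]
      apply Finset.sum_congr rfl
      intro y _
      ring
    rw [this, sum_sy_Py_aE hq0]
    ring
  rw [h4] at h3
  exact h3.trans (h2.trans h1)

lemma gsum_pos (hq0 : ∀ x, 0 ≤ q x) (hq1 : ∑ x, q x = 1) {ρ : ℝ} (hρ : 0 ≤ ρ) :
    0 < gsum ch q ρ := by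
  have h := gsum_ge_exp (ch := ch) hq0 hq1 hρ
  have h2 := Real.exp_pos (-(ρ * mutInfo ch q))
  linarith

lemma E0_le_mul (hq0 : ∀ x, 0 ≤ q x) (hq1 : ∑ x, q x = 1) {ρ : ℝ} (hρ : 0 ≤ ρ) :
    E0 ch ρ q ≤ ρ * mutInfo ch q := by
  have h := Real.log_le_log (Real.exp_pos _) (gsum_ge_exp (ch := ch) hq0 hq1 hρ)
  rw [Real.log_exp] at h
  rw [E0_eq]
  linarith

section Curvature

variable [Nonempty X]

noncomputable def Kch (ch : DMC X Y) : ℝ :=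
  Lam ch ^ 2 * Real.exp (Lam ch) +
    Real.exp (Lam ch) * (8 * (Fintype.card Y : ℝ) + 2 * Lam ch ^ 2)

lemma Kch_nonneg (ch : DMC X Y) : 0 ≤ Kch ch := by
  have h1 := Lam_nonneg ch
  have h2 := (Real.exp_pos (Lam ch)).le
  have h3 : (0:ℝ) ≤ (Fintype.card Y : ℝ) := Nat.cast_nonneg _
  rw [Kch]
  positivity

lemma Fs_step_upper (hq0 : ∀ x, 0 ≤ q x) {ρ : ℝ} (hρ0 : 0 ≤ ρ) (hρ1 : ρ ≤ 1) {y : Y}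
    (hy : y ∈ sy ch q) :
    Fs ch q ρ y ^ (1+ρ) ≤
      Py ch q y * Real.exp (ρ * aE ch q y) * Real.exp (ρ^2 * (Lam ch ^2 * Real.exp (Lam ch))) := by
  have hPy : 0 < Py ch q y := Py_pos_of_mem_sy hq0 hy
  have h1ρ : (0:ℝ) < 1 + ρ := by linarith
  set K1 : ℝ := Lam ch ^ 2 * Real.exp (Lam ch) with hK1def
  have hK1 : 0 ≤ K1 := by
    have := (Real.exp_pos (Lam ch)).le
    positivity
  set tt : ℝ := ρ/(1+ρ) with htt
  have htt0 : 0 ≤ tt := by positivity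
  have htt1 : tt ≤ 1 := by
    rw [htt, div_le_one h1ρ]; linarith
  have httρ : tt ≤ ρ := by
    rw [htt, div_le_iff₀ h1ρ]; nlinarith
  have hrt : (1+ρ) * tt = ρ := by
    rw [htt]; field_simp
  -- Step A
  have stepA : Fs ch q ρ y ≤ Py ch q y + tt * cE ch q y + tt^2 * K1 * Py ch q y := by
    rw [Fs_eq_sum_sx hρ0 y, Py_eq_sum_sx, cE, Finset.mul_sum, Finset.mul_sum, ← Finset.sum_add_distrib,
      ← Finset.sum_add_distrib]
    apply Finset.sum_le_sum
    intro x hx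
    have hp : 0 < ch.p x y := mem_sx_p hx
    have hq : 0 < q x := mem_sx_q hq0 hx
    have hlogp : - Real.log (ch.p x y) ≤ Lam ch := neg_log_le_Lam ch hp
    have hlogp0 : 0 ≤ - Real.log (ch.p x y) := neg_log_nonneg ch hp
    set z : ℝ := tt * (- Real.log (ch.p x y)) with hz
    have hz0 : 0 ≤ z := mul_nonneg htt0 hlogp0
    have hzL : z ≤ Lam ch := by
      calc z ≤ 1 * (- Real.log (ch.p x y)) :=
        mul_le_mul_of_nonneg_right htt1 hlogp0
      _ = - Real.log (ch.p x y) := by ring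
      _ ≤ Lam ch := hlogp
    have hexpz : Real.exp z ≤ 1 + z + z^2 * Real.exp (Lam ch) :=
      exp_quad (Lam_nonneg ch) hzL
    have hz2 : z^2 * Real.exp (Lam ch) ≤ tt^2 * K1 := by
      rw [hz, hK1def]
      have h2 : (tt * -Real.log (ch.p x y))^2 = tt^2 * (-Real.log (ch.p x y))^2 := by ring
      rw [h2]
      have h3 : (-Real.log (ch.p x y))^2 ≤ Lam ch ^2 := by nlinarith
      have h4 := (Real.exp_pos (Lam ch)).le
      nlinarith [mul_le_mul_of_nonneg_right
        (mul_le_mul_of_nonneg_left h3 (sq_nonneg tt)) h4]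
    have hrw : ch.p x y ^ (1/(1+ρ)) = ch.p x y * Real.exp z := by
      rw [Real.rpow_def_of_pos hp]
      have : Real.log (ch.p x y) * (1/(1+ρ)) = Real.log (ch.p x y) + z := by
        rw [hz, htt]
        field_simp
        ring
      rw [this, Real.exp_add, Real.exp_log hp]
    rw [hrw]
    calc q x * (ch.p x y * Real.exp z)
        ≤ q x * (ch.p x y * (1 + z + z^2 * Real.exp (Lam ch))) := by
          apply mul_le_mul_of_nonneg_left _ hq.le
          exact mul_le_mul_of_nonneg_left hexpz hp.le
      _ ≤ q x * ch.p x y + tt * (q x * ch.p x y * -Real.log (ch.p x y))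
            + tt^2 * K1 * (q x * ch.p x y) := by
          have hqp : 0 ≤ q x * ch.p x y := (mul_pos hq hp).le
          have := mul_le_mul_of_nonneg_left hz2 hqp
          nlinarith [this]
  -- Step B
  have hX0 : 0 ≤ tt * (cE ch q y / Py ch q y) + tt^2 * K1 := by
    have hce := cE_nonneg (ch := ch) hq0 y
    positivity
  have stepA2 : Fs ch q ρ y ≤ Py ch q y * (1 + (tt * (cE ch q y / Py ch q y) + tt^2 * K1)) := by
    have : Py ch q y * (1 + (tt * (cE ch q y / Py ch q y) + tt^2 * K1))
        = Py ch q y + tt * cE ch q y + tt^2 * K1 * Py ch q y := by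
      field_simp
      ring
    rw [this]
    exact stepA
  have stepB := Real.rpow_le_rpow (Fs_nonneg hq0 y) stepA2 h1ρ.le
  set XX : ℝ := tt * (cE ch q y / Py ch q y) + tt^2 * K1 with hXX
  have h1X : (Py ch q y * (1 + XX)) ^ (1+ρ)
      = Py ch q y ^ (1+ρ) * (1 + XX) ^ (1+ρ) :=
    Real.mul_rpow hPy.le (by linarith)
  have h2X : (1 + XX) ^ (1+ρ) ≤ Real.exp ((1+ρ) * XX) := by
    have ha : 1 + XX ≤ Real.exp XX := by
      have := Real.add_one_le_exp XX; linarith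
    calc (1 + XX) ^ (1+ρ) ≤ Real.exp XX ^ (1+ρ) :=
      Real.rpow_le_rpow (by linarith) ha h1ρ.le
    _ = Real.exp ((1+ρ) * XX) := by
      rw [Real.rpow_def_of_pos (Real.exp_pos _), Real.log_exp]
      ring_nf
  have h3X : (1+ρ) * XX ≤ ρ * (cE ch q y / Py ch q y) + ρ^2 * K1 := by
    rw [hXX]
    have hcP : 0 ≤ cE ch q y / Py ch q y := div_nonneg (cE_nonneg hq0 y) hPy.le
    have e1 : (1+ρ) * (tt * (cE ch q y / Py ch q y)) = ρ * (cE ch q y / Py ch q y) := by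
      calc (1+ρ) * (tt * (cE ch q y / Py ch q y))
          = ((1+ρ) * tt) * (cE ch q y / Py ch q y) := by ring
        _ = ρ * (cE ch q y / Py ch q y) := by rw [hrt]
    have e2 : (1+ρ) * (tt^2 * K1) = ρ * tt * K1 := by
      rw [show (1+ρ) * (tt^2 * K1) = ((1+ρ)*tt) * tt * K1 by ring, hrt]
    have e3 : ρ * tt * K1 ≤ ρ^2 * K1 := by
      apply mul_le_mul_of_nonneg_right _ hK1
      nlinarith
    have hdist : (1+ρ) * (tt * (cE ch q y / Py ch q y) + tt^2 * K1)
        = (1+ρ) * (tt * (cE ch q y / Py ch q y)) + (1+ρ) * (tt^2 * K1) := by ring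
    linarith [e1, e2, e3, hdist]
  have h4X : Py ch q y ^ (1+ρ) = Py ch q y * Real.exp (ρ * Real.log (Py ch q y)) := by
    rw [show Py ch q y ^ (1+ρ) = Py ch q y ^ (1:ℝ) * Py ch q y ^ ρ by
      rw [← Real.rpow_add hPy], Real.rpow_one, Real.rpow_def_of_pos hPy]
    ring_nf
  calc Fs ch q ρ y ^ (1+ρ)
      ≤ (Py ch q y * (1 + XX)) ^ (1+ρ) := stepB
    _ = Py ch q y ^ (1+ρ) * (1 + XX) ^ (1+ρ) := h1X
    _ ≤ Py ch q y ^ (1+ρ) * Real.exp ((1+ρ) * XX) := by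
        apply mul_le_mul_of_nonneg_left h2X (Real.rpow_nonneg hPy.le _)
    _ ≤ Py ch q y ^ (1+ρ) * Real.exp (ρ * (cE ch q y / Py ch q y) + ρ^2 * K1) := by
        apply mul_le_mul_of_nonneg_left _ (Real.rpow_nonneg hPy.le _)
        exact Real.exp_le_exp.mpr h3X
    _ = Py ch q y * Real.exp (ρ * aE ch q y) * Real.exp (ρ^2 * K1) := by
        rw [h4X, aE, mul_assoc, ← Real.exp_add, mul_assoc, ← Real.exp_add]
        congr 2
        ring

lemma sum_Py_exp_le (hq0 : ∀ x, 0 ≤ q x) (hq1 : ∑ x, q x = 1) {ρ : ℝ}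
    (hρ0 : 0 ≤ ρ) (hρ1 : ρ ≤ 1) :
    ∑ y ∈ sy ch q, Py ch q y * Real.exp (ρ * aE ch q y)
      ≤ 1 - ρ * mutInfo ch q
        + ρ^2 * (Real.exp (Lam ch) * (8 * (Fintype.card Y : ℝ) + 2 * Lam ch ^ 2)) := by
  have hstep : ∀ y ∈ sy ch q, Py ch q y * Real.exp (ρ * aE ch q y)
      ≤ Py ch q y * (1 + ρ * aE ch q y)
        + ρ^2 * Real.exp (Lam ch) * (Py ch q y * (aE ch q y)^2) := by
    intro y hy
    have hPy : 0 < Py ch q y := Py_pos_of_mem_sy hq0 hy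
    have haL : aE ch q y ≤ Lam ch := aE_le_Lam hq0 hq1 hy
    have hwL : ρ * aE ch q y ≤ Lam ch := by
      rcases le_or_gt (aE ch q y) 0 with h | h
      · have : ρ * aE ch q y ≤ 0 := mul_nonpos_of_nonneg_of_nonpos hρ0 h
        linarith [Lam_nonneg ch]
      · calc ρ * aE ch q y ≤ 1 * aE ch q y := mul_le_mul_of_nonneg_right hρ1 h.le
        _ ≤ Lam ch := by linarith
    have hq2 := exp_quad (Lam_nonneg ch) hwL
    have : Real.exp (ρ * aE ch q y) ≤ 1 + ρ * aE ch q y + ρ^2 * (aE ch q y)^2 * Real.exp (Lam ch) := by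
      calc Real.exp (ρ * aE ch q y)
          ≤ 1 + ρ * aE ch q y + (ρ * aE ch q y)^2 * Real.exp (Lam ch) := hq2
        _ = 1 + ρ * aE ch q y + ρ^2 * (aE ch q y)^2 * Real.exp (Lam ch) := by ring
    have hPy' := hPy.le
    nlinarith [mul_le_mul_of_nonneg_left this hPy']
  have hsum := Finset.sum_le_sum hstep
  have hS2 : ∑ y ∈ sy ch q, Py ch q y * (aE ch q y)^2
      ≤ 8 * (Fintype.card Y : ℝ) + 2 * Lam ch ^ 2 := by
    have hterm : ∀ y ∈ sy ch q, Py ch q y * (aE ch q y)^2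
        ≤ 8 + 2 * Lam ch ^2 * Py ch q y := by
      intro y hy
      have hPy : 0 < Py ch q y := Py_pos_of_mem_sy hq0 hy
      have h1 : (aE ch q y)^2 ≤ 2 * (Real.log (Py ch q y))^2 + 2 * (cE ch q y / Py ch q y)^2 := by
        rw [aE]
        nlinarith [sq_nonneg (Real.log (Py ch q y) - cE ch q y / Py ch q y)]
      have h2 : Py ch q y * (Real.log (Py ch q y))^2 ≤ 4 :=
        mul_sq_log_le hPy (Py_le_one hq0 hq1 y)
      have h3 : 0 ≤ cE ch q y / Py ch q y := div_nonneg (cE_nonneg hq0 y) hPy.le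
      have h4 : cE ch q y / Py ch q y ≤ Lam ch := by
        rw [div_le_iff₀ hPy]; exact cE_le hq0 y
      have h5 : (cE ch q y / Py ch q y)^2 ≤ Lam ch ^2 := by nlinarith
      nlinarith [mul_le_mul_of_nonneg_left h1 hPy.le,
        mul_le_mul_of_nonneg_left h5 hPy.le]
    calc ∑ y ∈ sy ch q, Py ch q y * (aE ch q y)^2
        ≤ ∑ y ∈ sy ch q, (8 + 2 * Lam ch ^2 * Py ch q y) := Finset.sum_le_sum hterm
      _ = 8 * (sy ch q).card + 2 * Lam ch^2 * ∑ y ∈ sy ch q, Py ch q y := by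
          rw [Finset.sum_add_distrib, Finset.sum_const, ← Finset.mul_sum]
          push_cast
          ring
      _ ≤ 8 * (Fintype.card Y : ℝ) + 2 * Lam ch ^2 := by
          rw [sum_sy_Py hq1, mul_one]
          have : ((sy ch q).card : ℝ) ≤ (Fintype.card Y : ℝ) := by
            exact_mod_cast Finset.card_le_card (Finset.subset_univ _)
          linarith
  have hlin : ∑ y ∈ sy ch q, Py ch q y * (1 + ρ * aE ch q y)
      = 1 - ρ * mutInfo ch q := by
    have : ∀ y ∈ sy ch q, Py ch q y * (1 + ρ * aE ch q y)
        = Py ch q y + ρ * (Py ch q y * aE ch q y) := by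
      intro y _
      ring
    rw [Finset.sum_congr rfl this, Finset.sum_add_distrib, ← Finset.mul_sum,
      sum_sy_Py hq1, sum_sy_Py_aE hq0]
    ring
  have hfin : ∑ y ∈ sy ch q, (Py ch q y * (1 + ρ * aE ch q y)
      + ρ^2 * Real.exp (Lam ch) * (Py ch q y * (aE ch q y)^2))
      = (1 - ρ * mutInfo ch q) + ρ^2 * Real.exp (Lam ch)
          * ∑ y ∈ sy ch q, Py ch q y * (aE ch q y)^2 := by
    rw [Finset.sum_add_distrib, hlin, ← Finset.mul_sum]
  rw [hfin] at hsum
  have hc : ρ^2 * Real.exp (Lam ch) * ∑ y ∈ sy ch q, Py ch q y * (aE ch q y)^2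
      ≤ ρ^2 * (Real.exp (Lam ch) * (8 * (Fintype.card Y : ℝ) + 2 * Lam ch ^ 2)) := by
    rw [mul_assoc]
    apply mul_le_mul_of_nonneg_left _ (sq_nonneg ρ)
    exact mul_le_mul_of_nonneg_left hS2 (Real.exp_pos _).le
  linarith

lemma E0_ge (hq0 : ∀ x, 0 ≤ q x) (hq1 : ∑ x, q x = 1) {ρ : ℝ}
    (hρ0 : 0 ≤ ρ) (hρ1 : ρ ≤ 1) :
    ρ * mutInfo ch q - Kch ch * ρ^2 ≤ E0 ch ρ q := by
  set K1 : ℝ := Lam ch ^ 2 * Real.exp (Lam ch) with hK1def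
  set K2 : ℝ := Real.exp (Lam ch) * (8 * (Fintype.card Y : ℝ) + 2 * Lam ch ^ 2) with hK2def
  have h1ρ : (0:ℝ) < 1 + ρ := by linarith
  have hgsy : gsum ch q ρ = ∑ y ∈ sy ch q, Fs ch q ρ y ^ (1+ρ) := by
    rw [gsum, sy, Finset.sum_filter_of_ne]
    intro y _ h
    by_contra hPy
    have hPy' : Py ch q y = 0 := by simpa using hPy
    rw [Fs_eq_zero_of_not_mem_sy hq0 hρ0 (show y ∉ sy ch q by simp [sy, hPy']),
      Real.zero_rpow (by positivity)] at h
    exact h rfl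
  have hg1 : gsum ch q ρ ≤ Real.exp (ρ^2 * K1) * ∑ y ∈ sy ch q, Py ch q y * Real.exp (ρ * aE ch q y) := by
    rw [hgsy, Finset.mul_sum]
    apply Finset.sum_le_sum
    intro y hy
    calc Fs ch q ρ y ^ (1+ρ)
        ≤ Py ch q y * Real.exp (ρ * aE ch q y) * Real.exp (ρ^2 * K1) :=
          Fs_step_upper hq0 hρ0 hρ1 hy
      _ = Real.exp (ρ^2 * K1) * (Py ch q y * Real.exp (ρ * aE ch q y)) := by ring
  have hg2 : gsum ch q ρ ≤ Real.exp (ρ^2 * K1) * (1 - ρ * mutInfo ch q + ρ^2 * K2) := by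
    apply hg1.trans
    apply mul_le_mul_of_nonneg_left _ (Real.exp_pos _).le
    exact sum_Py_exp_le hq0 hq1 hρ0 hρ1
  have hgpos : 0 < gsum ch q ρ := gsum_pos hq0 hq1 hρ0
  have hMpos : 0 < 1 - ρ * mutInfo ch q + ρ^2 * K2 := by
    by_contra hc
    push_neg at hc
    have : Real.exp (ρ^2 * K1) * (1 - ρ * mutInfo ch q + ρ^2 * K2) ≤ 0 :=
      mul_nonpos_of_nonneg_of_nonpos (Real.exp_pos _).le hc
    linarith
  have hlog := Real.log_le_log hgpos hg2
  rw [Real.log_mul (ne_of_gt (Real.exp_pos _)) (ne_of_gt hMpos), Real.log_exp] at hlog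
  have hlog2 : Real.log (1 - ρ * mutInfo ch q + ρ^2 * K2) ≤ - ρ * mutInfo ch q + ρ^2 * K2 := by
    have := Real.log_le_sub_one_of_pos hMpos
    linarith
  rw [E0_eq]
  have hK : Kch ch = K1 + K2 := by rw [Kch, hK1def, hK2def]
  rw [hK]
  linarith

end Curvature

lemma E0_nonneg (hq0 : ∀ x, 0 ≤ q x) (hq1 : ∑ x, q x = 1) {ρ : ℝ} (hρ : 0 ≤ ρ) :
    0 ≤ E0 ch ρ q := by
  have h1ρ : (0:ℝ) < 1 + ρ := by linarith
  have hinner : ∀ y, Fs ch q ρ y ^ (1+ρ) ≤ ∑ x, q x * ch.p x y := by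
    intro y
    have key := Real.rpow_arith_mean_le_arith_mean_rpow univ q
      (fun x => ch.p x y ^ (1/(1+ρ))) (fun x _ => hq0 x) hq1
      (fun x _ => Real.rpow_nonneg (ch.nonneg x y) _) (show (1:ℝ) ≤ 1 + ρ by linarith)
    rw [Fs]
    apply key.trans
    apply le_of_eq
    apply Finset.sum_congr rfl
    intro x _
    congr 1
    show (ch.p x y ^ ((1:ℝ)/(1+ρ))) ^ (1+ρ) = ch.p x y
    rw [← Real.rpow_mul (ch.nonneg x y), one_div,
      inv_mul_cancel₀ (ne_of_gt h1ρ), Real.rpow_one]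
  have hg1 : gsum ch q ρ ≤ 1 := by
    rw [gsum]
    calc ∑ y, Fs ch q ρ y ^ (1+ρ) ≤ ∑ y, ∑ x, q x * ch.p x y :=
      Finset.sum_le_sum fun y _ => hinner y
    _ = 1 := sum_Py hq1
  have hg0 : 0 ≤ gsum ch q ρ :=
    Finset.sum_nonneg fun y _ => Real.rpow_nonneg (Fs_nonneg hq0 y) _
  rw [E0_eq]
  have := Real.log_nonpos hg0 hg1
  linarith

lemma E0_zero (hq1 : ∑ x, q x = 1) : E0 ch 0 q = 0 := by
  rw [E0_eq]
  have : gsum ch q 0 = 1 := by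
    rw [gsum]
    have h1 : ∀ y, Fs ch q 0 y = Py ch q y := by
      intro y
      rw [Fs, Py]
      apply Finset.sum_congr rfl
      intro x _
      norm_num
    have h2 : ∀ y : Y, Fs ch q 0 y ^ ((1:ℝ)+0) = Fs ch q 0 y := by
      intro y
      norm_num
    calc ∑ y, Fs ch q 0 y ^ ((1:ℝ)+0) = ∑ y, Py ch q y := by
          apply Finset.sum_congr rfl
          intro y _
          rw [h2, h1]
      _ = 1 := sum_Py hq1
  rw [this, Real.log_one, neg_zero]

end Q

section ChannelLevel

variable [Nonempty X] [Nonempty Y] (ch : DMC X Y)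

lemma mutInfo_le_card {q : X → ℝ} (hq0 : ∀ x, 0 ≤ q x) (hq1 : ∑ x, q x = 1) :
    mutInfo ch q ≤ (Fintype.card Y : ℝ) := by
  rw [mutinfo_eq hq0]
  calc ∑ y ∈ sy ch q, (-(cE ch q y) - Py ch q y * Real.log (Py ch q y))
      ≤ ∑ y ∈ sy ch q, 1 := by
        apply Finset.sum_le_sum
        intro y hy
        have h1 : 0 ≤ cE ch q y := cE_nonneg hq0 y
        have hPy : 0 < Py ch q y := Py_pos_of_mem_sy hq0 hy
        have h2 : |Real.log (Py ch q y) * Py ch q y| < 1 :=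
          Real.abs_log_mul_self_lt _ hPy (Py_le_one hq0 hq1 y)
        have h3 : - (Py ch q y * Real.log (Py ch q y)) < 1 := by
          rw [abs_lt] at h2
          nlinarith [h2.1]
        linarith
    _ = ((sy ch q).card : ℝ) := by rw [Finset.sum_const]; simp
    _ ≤ (Fintype.card Y : ℝ) := by
        exact_mod_cast Finset.card_le_card (Finset.subset_univ _)

noncomputable def unifID : InputDist X :=
  ⟨fun _ => (Fintype.card X : ℝ)⁻¹, fun _ => by positivity, by
    rw [Finset.sum_const, Finset.card_univ, nsmul_eq_mul]
    field_simp⟩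

lemma range_mutInfo_nonempty :
    (Set.range fun q : InputDist X => mutInfo ch q.1).Nonempty :=
  ⟨_, ⟨unifID, rfl⟩⟩

lemma bddAbove_range_mutInfo :
    BddAbove (Set.range fun q : InputDist X => mutInfo ch q.1) := by
  refine ⟨(Fintype.card Y : ℝ), ?_⟩
  rintro e ⟨q, rfl⟩
  exact mutInfo_le_card ch q.2.1 q.2.2

lemma mutInfo_le_capacity (q : InputDist X) : mutInfo ch q.1 ≤ capacity ch :=
  le_csSup (bddAbove_range_mutInfo ch) ⟨q, rfl⟩

lemma E0_le_rhoC (q : InputDist X) {ρ : ℝ} (hρ : 0 ≤ ρ) :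
    E0 ch ρ q.1 ≤ ρ * capacity ch :=
  (E0_le_mul q.2.1 q.2.2 hρ).trans
    (mul_le_mul_of_nonneg_left (mutInfo_le_capacity ch q) hρ)

end ChannelLevel

section Sets

variable [Nonempty X] [Nonempty Y] (ch : DMC X Y) (R : ℝ)

def SetE : Set ℝ :=
  {e : ℝ | ∃ q : InputDist X, ∃ ro ∈ Set.Icc (R / capacity ch) 1,
    ∃ ρ ∈ Set.Icc (0:ℝ) 1,
    e = (1 - ro) * (-ρ * (R / ro) +
          E0 ch ρ q.1 * (1 - (1 + ro) / 2 * E0 ch ρ q.1))}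

def SetT : Set ℝ :=
  {e : ℝ | ∃ q : InputDist X, ∃ ro ∈ Set.Icc (R / capacity ch) 1,
    ∃ ρ ∈ Set.Icc (0:ℝ) 1,
    e = (1 - ro) * (-ρ * (R / ro) + E0 ch ρ q.1 * (1 - E0 ch ρ q.1))}

lemma EFc_eq : EFc ch R = sSup (SetE ch R) := rfl

lemma tildeEFc_eq : tildeEFc ch R = sSup (SetT ch R) := rfl

variable {ch R}

lemma zero_mem_SetE (hC : 0 < capacity ch) (hRC : R < capacity ch) :
    (0:ℝ) ∈ SetE ch R := by
  refine ⟨unifID, 1, ⟨?_, le_refl 1⟩, 0, ⟨le_refl 0, zero_le_one⟩, by ring⟩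
  rw [div_le_one hC]
  exact hRC.le

lemma zero_mem_SetT (hC : 0 < capacity ch) (hRC : R < capacity ch) :
    (0:ℝ) ∈ SetT ch R := by
  refine ⟨unifID, 1, ⟨?_, le_refl 1⟩, 0, ⟨le_refl 0, zero_le_one⟩, by ring⟩
  rw [div_le_one hC]
  exact hRC.le

lemma bddAbove_SetE (hC : 0 < capacity ch) (hR0 : 0 < R) : BddAbove (SetE ch R) := by
  refine ⟨1, ?_⟩
  rintro e ⟨q, ro, ⟨hro1, hro2⟩, ρ, ⟨hρ0, hρ1⟩, rfl⟩
  have hro0 : 0 < ro := lt_of_lt_of_le (div_pos hR0 hC) hro1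
  set u := E0 ch ρ q.1 with hu
  have hu0 : 0 ≤ u := E0_nonneg q.2.1 q.2.2 hρ0
  have h1 : -ρ * (R / ro) ≤ 0 := by
    have : 0 ≤ R / ro := (div_pos hR0 hro0).le
    nlinarith
  have h2 : u * (1 - (1 + ro) / 2 * u) ≤ 1/2 := by nlinarith [sq_nonneg (u - 1), sq_nonneg u]
  have h3 : -ρ * (R / ro) + u * (1 - (1 + ro) / 2 * u) ≤ 1/2 := by linarith
  have h4 : 0 ≤ 1 - ro := by linarith
  nlinarith [mul_le_mul_of_nonneg_left h3 h4]

lemma bddAbove_SetT (hC : 0 < capacity ch) (hR0 : 0 < R) : BddAbove (SetT ch R) := by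
  refine ⟨1, ?_⟩
  rintro e ⟨q, ro, ⟨hro1, hro2⟩, ρ, ⟨hρ0, hρ1⟩, rfl⟩
  have hro0 : 0 < ro := lt_of_lt_of_le (div_pos hR0 hC) hro1
  set u := E0 ch ρ q.1 with hu
  have hu0 : 0 ≤ u := E0_nonneg q.2.1 q.2.2 hρ0
  have h1 : -ρ * (R / ro) ≤ 0 := by
    have : 0 ≤ R / ro := (div_pos hR0 hro0).le
    nlinarith
  have h2 : u * (1 - u) ≤ 1/2 := by nlinarith [sq_nonneg (u - 1)]
  have h3 : -ρ * (R / ro) + u * (1 - u) ≤ 1/2 := by linarith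
  have h4 : 0 ≤ 1 - ro := by linarith
  nlinarith [mul_le_mul_of_nonneg_left h3 h4]

lemma tildeEFc_nonneg (hC : 0 < capacity ch) (hR0 : 0 < R) (hRC : R < capacity ch) :
    0 ≤ tildeEFc ch R := by
  rw [tildeEFc_eq]
  exact le_csSup (bddAbove_SetT hC hR0) (zero_mem_SetT hC hRC)

lemma tildeEFc_le_EFc (hC : 0 < capacity ch) (hR0 : 0 < R) (hRC : R < capacity ch) :
    tildeEFc ch R ≤ EFc ch R := by
  rw [tildeEFc_eq, EFc_eq]
  apply csSup_le ⟨0, zero_mem_SetT hC hRC⟩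
  rintro e ⟨q, ro, ⟨hro1, hro2⟩, ρ, ⟨hρ0, hρ1⟩, rfl⟩
  have hle : (1 - ro) * (-ρ * (R / ro) + E0 ch ρ q.1 * (1 - E0 ch ρ q.1))
      ≤ (1 - ro) * (-ρ * (R / ro) +
          E0 ch ρ q.1 * (1 - (1 + ro) / 2 * E0 ch ρ q.1)) := by
    set u := E0 ch ρ q.1 with hu
    have hu0 : 0 ≤ u := E0_nonneg q.2.1 q.2.2 hρ0
    have h4 : 0 ≤ 1 - ro := by linarith
    have hbr : u * (1 - u) ≤ u * (1 - (1 + ro) / 2 * u) := by nlinarith [sq_nonneg u]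
    have := mul_le_mul_of_nonneg_left (show -ρ * (R / ro) + u * (1 - u)
      ≤ -ρ * (R / ro) + u * (1 - (1 + ro) / 2 * u) by linarith) h4
    exact this
  exact hle.trans (le_csSup (bddAbove_SetE hC hR0) ⟨q, ro, ⟨hro1, hro2⟩, ρ, ⟨hρ0, hρ1⟩, rfl⟩)

set_option maxHeartbeats 1000000 in
/-- Lemma U : the gap between the two exponents is at most `8 D^4 / C^4` near capacity. -/
lemma EFc_le_tilde_add (hC : 0 < capacity ch) (hR0 : 0 < R) (hRC : R < capacity ch)
    (hR2 : capacity ch / 2 ≤ R) :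
    EFc ch R ≤ tildeEFc ch R + 8 * (capacity ch - R)^4 / (capacity ch)^4 := by
  set C := capacity ch with hCdef
  set D := C - R with hDdef
  have hD0 : 0 < D := by rw [hDdef]; linarith
  have herr : 0 ≤ 8 * D^4 / C^4 := by positivity
  have hM0 : 0 ≤ tildeEFc ch R := tildeEFc_nonneg hC hR0 hRC
  rw [EFc_eq]
  apply csSup_le ⟨0, zero_mem_SetE hC hRC⟩
  rintro e ⟨q, ro, ⟨hro1, hro2⟩, ρ, ⟨hρ0, hρ1⟩, rfl⟩
  have hro1' : R / C ≤ ro := hro1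
  set u := E0 ch ρ q.1 with hu
  have hu0 : 0 ≤ u := E0_nonneg q.2.1 q.2.2 hρ0
  have huC : u ≤ ρ * C := E0_le_rhoC ch q hρ0
  have hro0 : 0 < ro := lt_of_lt_of_le (div_pos hR0 hC) hro1'
  set B := -ρ * (R / ro) + u * (1 - (1 + ro) / 2 * u) with hB
  have h_le_til : (1 - ro) * (-ρ * (R / ro) + u * (1 - u)) ≤ tildeEFc ch R := by
    rw [tildeEFc_eq]
    refine le_csSup (bddAbove_SetT hC hR0) ⟨q, ro, ⟨hro1, hro2⟩, ρ, ⟨hρ0, hρ1⟩, by rw [hu]⟩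
  clear_value u B D C
  clear hro1 hu
  rcases le_or_gt ((1 - ro) * B) 0 with hneg | hpos
  · linarith
  · have h1ro : 0 < 1 - ro := by
      rcases lt_or_eq_of_le hro2 with h | h
      · linarith
      · exfalso; rw [h] at hpos; simp at hpos
    have hBpos : 0 < B := by
      by_contra hcon
      push_neg at hcon
      nlinarith
    have hRro : R ≤ R / ro := by
      rw [le_div_iff₀ hro0]
      nlinarith
    have hB2 : ρ * (R / ro) < u - u^2/2 := by
      have hq2 : u * (1 - (1 + ro) / 2 * u) ≤ u - u^2/2 := by nlinarith [sq_nonneg u]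
      nlinarith [hBpos]
    have hu2 : u^2 < 2 * ρ * D := by
      have h5 : ρ * R ≤ ρ * (R / ro) := mul_le_mul_of_nonneg_left hRro hρ0
      nlinarith [huC]
    have hρpos : 0 < ρ := by
      rcases lt_or_eq_of_le hρ0 with h | h
      · exact h
      · exfalso
        have h6 : u = 0 := by nlinarith [huC]
        rw [← h, h6] at hB2
        norm_num at hB2
    have hulow : ρ * R < u := by
      have h5 : ρ * R ≤ ρ * (R / ro) := mul_le_mul_of_nonneg_left hRro hρ0
      linarith [hB2, h5, sq_nonneg u]
    have hρR2 : ρ * R^2 < 2 * D := by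
      have h7 : (ρ * R) * (ρ * R) < u * u := by
        apply mul_self_lt_mul_self _ hulow
        exact mul_nonneg hρ0 hR0.le
      have h8 : ρ * (ρ * R^2) < ρ * (2 * D) := by linarith [h7, hu2]
      exact lt_of_mul_lt_mul_left h8 hρ0
    have h1roD : (1 - ro) * C ≤ D := by
      have h9 : R / C ≤ ro := hro1'
      rw [div_le_iff₀ hC] at h9
      linarith [h9]
    have s2 : ρ * C^2 ≤ 8 * D := by
      have hCR : C^2 ≤ 4 * R^2 := by nlinarith [hR2, hC, hR0]
      linarith [mul_le_mul_of_nonneg_left hCR hρ0, hρR2]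
    have s3 : u^2 * C^2 ≤ 16 * D^2 := by
      linarith [mul_le_mul_of_nonneg_right hu2.le (sq_nonneg C),
        mul_le_mul_of_nonneg_left s2 (by linarith : (0:ℝ) ≤ 2 * D)]
    have s4 : (1 - ro)^2 * C^2 ≤ D^2 := by
      have hmm := mul_self_le_mul_self (mul_nonneg h1ro.le hC.le) h1roD
      nlinarith [hmm]
    have s5 : (1 - ro)^2 * u^2 * C^4 ≤ 16 * D^4 := by
      have hmm := mul_le_mul s4 s3 (by positivity) (by positivity)
      nlinarith [hmm]
    have herr2 : (1 - ro)^2 * u^2 / 2 ≤ 8 * D^4 / C^4 := by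
      rw [div_le_div_iff₀ (by norm_num) (by positivity)]
      nlinarith [s5]
    have hiden : (1 - ro) * B
        = (1 - ro) * (-ρ * (R / ro) + u * (1 - u)) + (1 - ro)^2 * u^2 / 2 := by
      rw [hB]; ring
    linarith

set_option maxHeartbeats 1000000 in
/-- Lemma L : cubic lower bound on the tilde exponent near capacity. -/
lemma tilde_ge (hC : 0 < capacity ch) (hR0 : 0 < R) (hRC : R < capacity ch)
    (hDV : capacity ch - R ≤ 6 * (Kch ch + (capacity ch)^2)) :
    (capacity ch - R)^3 / (144 * capacity ch * (Kch ch + (capacity ch)^2))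
      ≤ tildeEFc ch R := by
  set C := capacity ch with hCdef
  set V := Kch ch + C^2 with hVdef
  have hV : 0 < V := by
    have h1 := Kch_nonneg ch
    have h2 : 0 < C^2 := by positivity
    rw [hVdef]; linarith
  set D := C - R with hDdef
  have hD0 : 0 < D := by rw [hDdef]; linarith
  have hDC : D < C := by rw [hDdef]; linarith
  have hlt : C - D/3 < sSup (Set.range fun q : InputDist X => mutInfo ch q.1) := by
    have : C - D/3 < C := by linarith
    exact this
  obtain ⟨Iv, hIvmem, hIv⟩ := exists_lt_of_lt_csSup (range_mutInfo_nonempty ch) hlt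
  obtain ⟨q, rfl⟩ := hIvmem
  have hIv' : C - D/3 < mutInfo ch q.1 := hIv
  set ro := 1 - D/(4*C) with hro
  set ρ := D/(6*V) with hρdef
  have hs0 : 0 < D/(4*C) := by positivity
  have hs14 : D/(4*C) ≤ 1/4 := by
    rw [div_le_iff₀ (by positivity : (0:ℝ) < 4*C)]
    linarith
  have hro0 : 0 < ro := by rw [hro]; linarith
  have hro2 : ro ≤ 1 := by rw [hro]; linarith
  have hro1 : R / capacity ch ≤ ro := by
    show R / C ≤ ro
    rw [div_le_iff₀ hC, hro]
    have hexp : (1 - D/(4*C)) * C = C - D/4 := by field_simp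
    rw [hexp]
    rw [hDdef]
    linarith
  have hρ0 : 0 ≤ ρ := by rw [hρdef]; positivity
  have hρ1 : ρ ≤ 1 := by
    rw [hρdef, div_le_one (by positivity)]
    linarith [hDV]
  have hRro : R / ro ≤ R + D/3 := by
    rw [div_le_iff₀ hro0, hro]
    have hx : (R + D/3) * (D/(4*C)) ≤ D/3 := by
      have h1 : R + D/3 ≤ 4*C/3 := by linarith
      calc (R + D/3) * (D/(4*C)) ≤ (4*C/3) * (D/(4*C)) :=
        mul_le_mul_of_nonneg_right h1 hs0.le
      _ = D/3 := by field_simp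
    nlinarith [hx]
  have hq0 := q.2.1
  have hq1 := q.2.2
  set u := E0 ch ρ q.1 with hu
  have hu0 : 0 ≤ u := E0_nonneg hq0 hq1 hρ0
  have huup : u ≤ ρ * C := E0_le_rhoC ch q hρ0
  have hulow : ρ * (C - D/3) - Kch ch * ρ^2 ≤ u := by
    have hE := E0_ge (ch := ch) hq0 hq1 hρ0 hρ1
    have h2 : ρ * (C - D/3) ≤ ρ * mutInfo ch q.1 :=
      mul_le_mul_of_nonneg_left hIv'.le hρ0
    rw [← hu] at hE
    linarith
  have hρV : ρ * V = D/6 := by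
    rw [hρdef]; field_simp
  have hbr : ρ * (D/6) ≤ -ρ * (R/ro) + u * (1 - u) := by
    have b2 : u^2 ≤ ρ^2 * C^2 := by nlinarith [huup, hu0]
    have b4 : ρ * (R/ro) ≤ ρ * (R + D/3) := mul_le_mul_of_nonneg_left hRro hρ0
    have hV2 : Kch ch * ρ^2 + C^2 * ρ^2 = V * ρ^2 := by rw [hVdef]; ring
    have hV3 : V * ρ^2 = (D/6) * ρ := by rw [← hρV]; ring
    have hDR : C - R = D := by rw [hDdef]
    nlinarith [hulow, b2, b4, hV2, hV3, hDR]
  have hmem : (1 - ro) * (-ρ * (R/ro) + u * (1 - u)) ∈ SetT ch R :=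
    ⟨q, ro, ⟨hro1, hro2⟩, ρ, ⟨hρ0, hρ1⟩, by rw [hu]⟩
  have hfin : D^3/(144*C*V) ≤ (1 - ro) * (-ρ * (R/ro) + u * (1 - u)) := by
    have h1ro : 1 - ro = D/(4*C) := by rw [hro]; ring
    have h2 : (D/(4*C)) * (ρ * (D/6)) = D^3/(144*C*V) := by
      rw [hρdef]; field_simp; ring
    calc D^3/(144*C*V) = (D/(4*C)) * (ρ * (D/6)) := h2.symm
      _ ≤ (D/(4*C)) * (-ρ * (R/ro) + u * (1 - u)) :=
        mul_le_mul_of_nonneg_left hbr hs0.le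
      _ = (1 - ro) * (-ρ * (R/ro) + u * (1 - u)) := by rw [h1ro]
  rw [tildeEFc_eq]
  exact hfin.trans (le_csSup (bddAbove_SetT hC hR0) hmem)

end Sets

end FountainAux

open FountainAux in
/-- Corollary 1 (asymptotic tightness): `lim_{R → C⁻} Ẽ_Fc(R)/E_Fc(R) = 1`, the limit
taken over rates `R ∈ (0, C)` with `E_Fc(R) > 0`. -/
theorem tildeEFc_asymptotically_tight
    {X Y : Type} [Fintype X] [Fintype Y] [Nonempty X] [Nonempty Y]
    (ch : DMC X Y) (hC : 0 < capacity ch) :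
    Tendsto (fun R => tildeEFc ch R / EFc ch R)
      (𝓝[{R : ℝ | R ∈ Set.Ioo 0 (capacity ch) ∧ 0 < EFc ch R}] (capacity ch))
      (𝓝 1) := by
  have hV : 0 < Kch ch + (capacity ch)^2 := by
    have h1 := Kch_nonneg ch
    have h2 : 0 < (capacity ch)^2 := by positivity
    linarith
  set K5 : ℝ := 8 * (144 * capacity ch * (Kch ch + (capacity ch)^2)) / (capacity ch)^4
    with hK5def
  have hK5 : 0 < K5 := by rw [hK5def]; positivity
  have hδ : 0 < min (capacity ch / 2) (6 * (Kch ch + (capacity ch)^2)) := by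
    apply lt_min (by linarith) (by linarith)
  have hev : ∀ᶠ R in
      𝓝[{R : ℝ | R ∈ Set.Ioo 0 (capacity ch) ∧ 0 < EFc ch R}] (capacity ch),
      capacity ch - min (capacity ch / 2) (6 * (Kch ch + (capacity ch)^2)) < R :=
    (eventually_gt_nhds (by linarith)).filter_mono nhdsWithin_le_nhds
  have key : ∀ᶠ R in
      𝓝[{R : ℝ | R ∈ Set.Ioo 0 (capacity ch) ∧ 0 < EFc ch R}] (capacity ch),
      1 - K5 * (capacity ch - R) ≤ tildeEFc ch R / EFc ch R
        ∧ tildeEFc ch R / EFc ch R ≤ 1 := by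
    filter_upwards [self_mem_nhdsWithin, hev] with R hRS hRδ
    obtain ⟨⟨hR0, hRC⟩, hM⟩ := hRS
    have hmin1 := min_le_left (capacity ch / 2) (6 * (Kch ch + (capacity ch)^2))
    have hmin2 := min_le_right (capacity ch / 2) (6 * (Kch ch + (capacity ch)^2))
    have hR2 : capacity ch / 2 ≤ R := by linarith
    have hDV : capacity ch - R ≤ 6 * (Kch ch + (capacity ch)^2) := by linarith
    have hD0 : 0 < capacity ch - R := by linarith
    have hU := EFc_le_tilde_add hC hR0 hRC hR2
    have hL := tilde_ge hC hR0 hRC hDV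
    have hle := tildeEFc_le_EFc hC hR0 hRC
    constructor
    · rw [le_div_iff₀ hM]
      have hMD : (capacity ch - R)^3 / (144 * capacity ch * (Kch ch + (capacity ch)^2))
          ≤ EFc ch R := hL.trans hle
      have h8 : 8 * (capacity ch - R)^4 / (capacity ch)^4
          ≤ K5 * (capacity ch - R) * EFc ch R := by
        have hstep : K5 * (capacity ch - R) *
            ((capacity ch - R)^3 / (144 * capacity ch * (Kch ch + (capacity ch)^2)))
            = 8 * (capacity ch - R)^4 / (capacity ch)^4 := by
          rw [hK5def]
          field_simp
        calc 8 * (capacity ch - R)^4 / (capacity ch)^4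
            = K5 * (capacity ch - R) *
              ((capacity ch - R)^3 / (144 * capacity ch * (Kch ch + (capacity ch)^2))) :=
              hstep.symm
          _ ≤ K5 * (capacity ch - R) * EFc ch R :=
              mul_le_mul_of_nonneg_left hMD (mul_nonneg hK5.le hD0.le)
      nlinarith [hU, h8]
    · rw [div_le_one hM]
      exact hle
  have hlow : Tendsto (fun R : ℝ => 1 - K5 * (capacity ch - R))
      (𝓝[{R : ℝ | R ∈ Set.Ioo 0 (capacity ch) ∧ 0 < EFc ch R}] (capacity ch)) (𝓝 1) := by
    have hcont : Continuous fun R : ℝ => 1 - K5 * (capacity ch - R) := by continuity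
    have h2 := hcont.tendsto (capacity ch)
    simp only [sub_self, mul_zero, sub_zero] at h2
    exact h2.mono_left nhdsWithin_le_nhds
  exact tendsto_of_tendsto_of_tendsto_of_le_of_le' hlow tendsto_const_nhds
    (key.mono fun R h => h.1) (key.mono fun R h => h.2)
end

section
/- Let F : [0, ∞) → ℝ be Borel measurable and bounded below. Then the infimum of ∫ F dμ over all Borel probability measures μ on [0, ∞) with ∫ z dμ(z) = 1 and F μ-integrable equals the infimum of γ F(z₁) + (1 − γ) F(z₂) over all γ ∈ [0, 1] and z₁, z₂ ∈ [0, ∞) with γ z₁ + (1 − γ) z₂ = 1. In particular, the infimum over all mean-one probability measures is attained (or approached) within the family of probability measures supported on at most two points. -/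
set_option maxHeartbeats 1000000


open MeasureTheory

/-- One redistribution step: a nonnegative combination of three nonnegative points can be
replaced by a combination of two points with the same total weight, the same weighted mean,
and a (weakly) smaller value of `F`. Sorted version. -/
private lemma step3sorted (F : ℝ → ℝ) {w₁ w₂ w₃ z₁ z₂ z₃ : ℝ}
    (hw₁ : 0 ≤ w₁) (hw₂ : 0 ≤ w₂) (hw₃ : 0 ≤ w₃)
    (hz₁ : 0 ≤ z₁) (h12 : z₁ ≤ z₂) (h23 : z₂ ≤ z₃) :
    ∃ a b x y : ℝ, 0 ≤ a ∧ 0 ≤ b ∧ 0 ≤ x ∧ 0 ≤ y ∧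
      a + b = w₁ + w₂ + w₃ ∧ a * x + b * y = w₁ * z₁ + w₂ * z₂ + w₃ * z₃ ∧
      a * F x + b * F y ≤ w₁ * F z₁ + w₂ * F z₂ + w₃ * F z₃ := by
  have hz₂ : 0 ≤ z₂ := hz₁.trans h12
  have hz₃ : 0 ≤ z₃ := hz₂.trans h23
  rcases eq_or_lt_of_le h12 with he | h12
  · subst he
    exact ⟨w₁ + w₂, w₃, z₁, z₃, by linarith, hw₃, hz₁, hz₃, by ring, by ring,
      le_of_eq (by ring)⟩
  rcases eq_or_lt_of_le h23 with he | h23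
  · subst he
    exact ⟨w₁, w₂ + w₃, z₁, z₂, hw₁, by linarith, hz₁, hz₂, by ring, by ring,
      le_of_eq (by ring)⟩
  have hd : (0:ℝ) < z₃ - z₁ := by linarith
  have hd1 : (0:ℝ) < z₂ - z₁ := by linarith
  have hd2 : (0:ℝ) < z₃ - z₂ := by linarith
  set θ : ℝ := (z₃ - z₂) / (z₃ - z₁) with hθdef
  have hθ0 : 0 ≤ θ := div_nonneg hd2.le hd.le
  have hθ1 : θ ≤ 1 := by rw [hθdef, div_le_one hd]; linarith
  have hmid : θ * z₁ + (1 - θ) * z₃ = z₂ := by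
    rw [hθdef]; field_simp; ring
  by_cases hch : θ * F z₁ + (1 - θ) * F z₃ ≤ F z₂
  · refine ⟨w₁ + θ * w₂, w₃ + (1 - θ) * w₂, z₁, z₃, by nlinarith, by nlinarith, hz₁, hz₃,
      by ring, ?_, ?_⟩
    · linear_combination w₂ * hmid
    · have h := mul_le_mul_of_nonneg_left hch hw₂
      nlinarith [h]
  · push_neg at hch
    by_cases hAB : w₁ * (z₂ - z₁) ≤ w₃ * (z₃ - z₂)
    · set s₃ : ℝ := w₁ * (z₂ - z₁) / (z₃ - z₂) with hs
      have hs0 : 0 ≤ s₃ := div_nonneg (by nlinarith) hd2.le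
      have hsw : s₃ ≤ w₃ := by rw [hs, div_le_iff₀ hd2]; nlinarith
      have hkey : θ * (w₁ + s₃) = w₁ := by rw [hs, hθdef]; field_simp; ring
      have hkey2 : (1 - θ) * (w₁ + s₃) = s₃ := by rw [hs, hθdef]; field_simp; ring
      have hmean : s₃ * (z₃ - z₂) = w₁ * (z₂ - z₁) := by
        rw [hs]; field_simp
      refine ⟨w₁ + w₂ + s₃, w₃ - s₃, z₂, z₃, by linarith, by linarith, hz₂, hz₃,
        by ring, by linear_combination -hmean, ?_⟩
      have h1 : (w₁ + s₃) * F z₂ ≤ (w₁ + s₃) * (θ * F z₁ + (1 - θ) * F z₃) :=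
        mul_le_mul_of_nonneg_left hch.le (by linarith)
      have h2 : (w₁ + s₃) * (θ * F z₁ + (1 - θ) * F z₃) = w₁ * F z₁ + s₃ * F z₃ := by
        linear_combination F z₁ * hkey + F z₃ * hkey2
      nlinarith [h1, h2]
    · push_neg at hAB
      set s₁ : ℝ := w₃ * (z₃ - z₂) / (z₂ - z₁) with hs
      have hs0 : 0 ≤ s₁ := div_nonneg (by nlinarith) hd1.le
      have hsw : s₁ ≤ w₁ := by rw [hs, div_le_iff₀ hd1]; nlinarith
      have hkey : θ * (s₁ + w₃) = s₁ := by rw [hs, hθdef]; field_simp; ring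
      have hkey2 : (1 - θ) * (s₁ + w₃) = w₃ := by rw [hs, hθdef]; field_simp; ring
      have hmean : s₁ * (z₂ - z₁) = w₃ * (z₃ - z₂) := by
        rw [hs]; field_simp
      refine ⟨w₁ - s₁, w₂ + w₃ + s₁, z₁, z₂, by linarith, by linarith, hz₁, hz₂,
        by ring, by linear_combination hmean, ?_⟩
      have h1 : (s₁ + w₃) * F z₂ ≤ (s₁ + w₃) * (θ * F z₁ + (1 - θ) * F z₃) :=
        mul_le_mul_of_nonneg_left hch.le (by linarith)
      have h2 : (s₁ + w₃) * (θ * F z₁ + (1 - θ) * F z₃) = s₁ * F z₁ + w₃ * F z₃ := by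
        linear_combination F z₁ * hkey + F z₃ * hkey2
      nlinarith [h1, h2]

/-- One redistribution step, unsorted version. -/
private lemma step3 (F : ℝ → ℝ) {w₁ w₂ w₃ z₁ z₂ z₃ : ℝ}
    (hw₁ : 0 ≤ w₁) (hw₂ : 0 ≤ w₂) (hw₃ : 0 ≤ w₃)
    (hz₁ : 0 ≤ z₁) (hz₂ : 0 ≤ z₂) (hz₃ : 0 ≤ z₃) :
    ∃ a b x y : ℝ, 0 ≤ a ∧ 0 ≤ b ∧ 0 ≤ x ∧ 0 ≤ y ∧
      a + b = w₁ + w₂ + w₃ ∧ a * x + b * y = w₁ * z₁ + w₂ * z₂ + w₃ * z₃ ∧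
      a * F x + b * F y ≤ w₁ * F z₁ + w₂ * F z₂ + w₃ * F z₃ := by
  rcases le_total z₁ z₂ with h12 | h21
  · rcases le_total z₂ z₃ with h23 | h32
    · exact step3sorted F hw₁ hw₂ hw₃ hz₁ h12 h23
    · rcases le_total z₁ z₃ with h13 | h31
      · obtain ⟨a, b, x, y, ha, hb, hx, hy, hsum, hmean, hval⟩ :=
          step3sorted F hw₁ hw₃ hw₂ hz₁ h13 h32
        exact ⟨a, b, x, y, ha, hb, hx, hy, by linarith, by linarith, by linarith⟩
      · obtain ⟨a, b, x, y, ha, hb, hx, hy, hsum, hmean, hval⟩ :=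
          step3sorted F hw₃ hw₁ hw₂ hz₃ h31 h12
        exact ⟨a, b, x, y, ha, hb, hx, hy, by linarith, by linarith, by linarith⟩
  · rcases le_total z₁ z₃ with h13 | h31
    · obtain ⟨a, b, x, y, ha, hb, hx, hy, hsum, hmean, hval⟩ :=
        step3sorted F hw₂ hw₁ hw₃ hz₂ h21 h13
      exact ⟨a, b, x, y, ha, hb, hx, hy, by linarith, by linarith, by linarith⟩
    · rcases le_total z₂ z₃ with h23 | h32
      · obtain ⟨a, b, x, y, ha, hb, hx, hy, hsum, hmean, hval⟩ :=
          step3sorted F hw₂ hw₃ hw₁ hz₂ h23 h31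
        exact ⟨a, b, x, y, ha, hb, hx, hy, by linarith, by linarith, by linarith⟩
      · obtain ⟨a, b, x, y, ha, hb, hx, hy, hsum, hmean, hval⟩ :=
          step3sorted F hw₃ hw₂ hw₁ hz₃ h32 h21
        exact ⟨a, b, x, y, ha, hb, hx, hy, by linarith, by linarith, by linarith⟩

/-- The set of values of two-point combinations with mean `x`. -/
private def TPset (F : ℝ → ℝ) (x : ℝ) : Set ℝ :=
  {v : ℝ | ∃ γ ∈ Set.Icc (0:ℝ) 1, ∃ z₁ ∈ Set.Ici (0:ℝ), ∃ z₂ ∈ Set.Ici (0:ℝ),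
      γ * z₁ + (1 - γ) * z₂ = x ∧ v = γ * F z₁ + (1 - γ) * F z₂}

private lemma TPset_nonempty (F : ℝ → ℝ) {x : ℝ} (hx : 0 ≤ x) : (TPset F x).Nonempty :=
  ⟨F x, 1, ⟨zero_le_one, le_refl 1⟩, x, hx, 0, Set.self_mem_Ici, by ring, by ring⟩

private lemma TPset_lb {F : ℝ → ℝ} {c : ℝ} (hc : ∀ x, 0 ≤ x → c ≤ F x) (x : ℝ) :
    ∀ v ∈ TPset F x, c ≤ v := by
  rintro v ⟨γ, ⟨hγ0, hγ1⟩, z₁, hz₁, z₂, hz₂, -, rfl⟩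
  have h1 := mul_le_mul_of_nonneg_left (hc z₁ hz₁) hγ0
  have h2 := mul_le_mul_of_nonneg_left (hc z₂ hz₂) (by linarith : (0:ℝ) ≤ 1 - γ)
  nlinarith

private lemma TPset_bdd {F : ℝ → ℝ} {c : ℝ} (hc : ∀ x, 0 ≤ x → c ≤ F x) (x : ℝ) :
    BddBelow (TPset F x) :=
  ⟨c, fun v hv => TPset_lb hc x v hv⟩

/-- The two-point lower envelope. -/
private noncomputable def mEnv (F : ℝ → ℝ) (x : ℝ) : ℝ := sInf (TPset F x)

private lemma mEnv_le {F : ℝ → ℝ} {c : ℝ} (hc : ∀ x, 0 ≤ x → c ≤ F x) {x : ℝ}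
    (hx : 0 ≤ x) : mEnv F x ≤ F x :=
  csInf_le (TPset_bdd hc x) ⟨1, ⟨zero_le_one, le_refl 1⟩, x, hx, 0, Set.self_mem_Ici, by ring, by ring⟩

private lemma mEnv_convex {F : ℝ → ℝ} {c : ℝ} (hc : ∀ x, 0 ≤ x → c ≤ F x) :
    ConvexOn ℝ (Set.Ici 0) (mEnv F) := by
  refine ⟨convex_Ici 0, ?_⟩
  intro x hx y hy p q hp hq hpq
  simp only [smul_eq_mul]
  refine le_of_forall_pos_le_add ?_
  intro ε hε
  have h1 : mEnv F x < mEnv F x + ε / 2 := by linarith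
  have h2 : mEnv F y < mEnv F y + ε / 2 := by linarith
  obtain ⟨v₁, hv₁mem, hv₁⟩ := exists_lt_of_csInf_lt (TPset_nonempty F hx) h1
  obtain ⟨v₂, hv₂mem, hv₂⟩ := exists_lt_of_csInf_lt (TPset_nonempty F hy) h2
  obtain ⟨γ, ⟨hγ0, hγ1⟩, a₁, ha₁, a₂, ha₂, hcx, rfl⟩ := hv₁mem
  obtain ⟨δ, ⟨hδ0, hδ1⟩, b₁, hb₁, b₂, hb₂, hcy, rfl⟩ := hv₂mem
  obtain ⟨A, B, X, Y, hA, hB, hX, hY, hS1, hM1, hV1⟩ :=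
    step3 F (mul_nonneg hp hγ0) (mul_nonneg hp (by linarith : (0:ℝ) ≤ 1 - γ))
      (mul_nonneg hq hδ0) ha₁ ha₂ hb₁
  obtain ⟨A', B', X', Y', hA', hB', hX', hY', hS2, hM2, hV2⟩ :=
    step3 F hA hB (mul_nonneg hq (by linarith : (0:ℝ) ≤ 1 - δ)) hX hY hb₂
  have hsum1 : A' + B' = 1 := by nlinarith [hS1, hS2, hpq]
  have hmean : A' * X' + B' * Y' = p * x + q * y := by
    linear_combination hM2 + hM1 + p * hcx + q * hcy
  have hB'eq : (1:ℝ) - A' = B' := by linarith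
  have hmem : A' * F X' + B' * F Y' ∈ TPset F (p * x + q * y) := by
    refine ⟨A', ⟨hA', by linarith⟩, X', hX', Y', hY', ?_, ?_⟩
    · rw [hB'eq]; exact hmean
    · rw [hB'eq]
  have hval : A' * F X' + B' * F Y' ≤
      p * (γ * F a₁ + (1 - γ) * F a₂) + q * (δ * F b₁ + (1 - δ) * F b₂) := by
    nlinarith [hV1, hV2]
  have step1 : mEnv F (p * x + q * y) ≤ A' * F X' + B' * F Y' :=
    csInf_le (TPset_bdd hc _) hmem
  have step2 : p * (γ * F a₁ + (1 - γ) * F a₂) ≤ p * (mEnv F x + ε / 2) :=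
    mul_le_mul_of_nonneg_left hv₁.le hp
  have step3' : q * (δ * F b₁ + (1 - δ) * F b₂) ≤ q * (mEnv F y + ε / 2) :=
    mul_le_mul_of_nonneg_left hv₂.le hq
  have hfin : p * (mEnv F x + ε / 2) + q * (mEnv F y + ε / 2)
      = p * mEnv F x + q * mEnv F y + ε / 2 := by
    linear_combination (ε / 2) * hpq
  linarith

private lemma exists_support_line {F : ℝ → ℝ} {c : ℝ} (hc : ∀ x, 0 ≤ x → c ≤ F x) :
    ∃ b : ℝ, ∀ z, 0 ≤ z → mEnv F 1 + b * (z - 1) ≤ mEnv F z := by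
  have hconv := mEnv_convex hc
  set S : Set ℝ := {s | ∃ w : ℝ, 1 < w ∧ s = (mEnv F w - mEnv F 1) / (w - 1)} with hS
  have hSne : S.Nonempty := ⟨(mEnv F 2 - mEnv F 1) / (2 - 1), 2, one_lt_two, rfl⟩
  have key : ∀ z, 0 ≤ z → z < 1 → ∀ s ∈ S, (mEnv F 1 - mEnv F z) / (1 - z) ≤ s := by
    rintro z hz hz1 s ⟨w, hw, rfl⟩
    exact hconv.slope_mono_adjacent hz (by linarith : (0:ℝ) ≤ w) hz1 hw
  have hSbdd : BddBelow S :=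
    ⟨(mEnv F 1 - mEnv F 0) / (1 - 0), fun s hs => key 0 le_rfl zero_lt_one s hs⟩
  refine ⟨sInf S, fun z hz => ?_⟩
  rcases lt_trichotomy z 1 with h | h | h
  · have h1 : (mEnv F 1 - mEnv F z) / (1 - z) ≤ sInf S := le_csInf hSne (key z hz h)
    have h2 : mEnv F 1 - mEnv F z ≤ sInf S * (1 - z) := (div_le_iff₀ (by linarith)).mp h1
    nlinarith [h2]
  · rw [h]; simp
  · have h1 : sInf S ≤ (mEnv F z - mEnv F 1) / (z - 1) := csInf_le hSbdd ⟨z, h, rfl⟩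
    have h2 : sInf S * (z - 1) ≤ mEnv F z - mEnv F 1 := (le_div_iff₀ (by linarith)).mp h1
    linarith

/-- Every two-point combination value is realized by a mean-one probability measure. -/
private lemma two_point_measure (F : ℝ → ℝ) {γ z₁ z₂ : ℝ}
    (hγ0 : 0 ≤ γ) (hγ1 : γ ≤ 1) (hz₁ : 0 ≤ z₁) (hz₂ : 0 ≤ z₂)
    (hcomb : γ * z₁ + (1 - γ) * z₂ = 1) :
    ∃ μ : Measure ℝ, IsProbabilityMeasure μ ∧ μ {x : ℝ | x < 0} = 0 ∧
        Integrable (fun x : ℝ => x) μ ∧ (∫ x, x ∂μ) = 1 ∧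
        Integrable F μ ∧ γ * F z₁ + (1 - γ) * F z₂ = ∫ x, F x ∂μ := by
  set μ : Measure ℝ :=
    ENNReal.ofReal γ • Measure.dirac z₁ + ENNReal.ofReal (1 - γ) • Measure.dirac z₂ with hμ
  have hdint : ∀ (f : ℝ → ℝ) (a : ℝ), Integrable f (Measure.dirac a) := fun f a =>
    (integrable_const (f a)).congr (ae_eq_dirac f).symm
  have hint : ∀ f : ℝ → ℝ, Integrable f μ := fun f =>
    ((hdint f z₁).smul_measure ENNReal.ofReal_ne_top).add_measure
      ((hdint f z₂).smul_measure ENNReal.ofReal_ne_top)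
  have hI : ∀ f : ℝ → ℝ, ∫ x, f x ∂μ = γ * f z₁ + (1 - γ) * f z₂ := by
    intro f
    rw [hμ, integral_add_measure ((hdint f z₁).smul_measure ENNReal.ofReal_ne_top)
        ((hdint f z₂).smul_measure ENNReal.ofReal_ne_top),
      integral_smul_measure, integral_smul_measure, integral_dirac, integral_dirac,
      ENNReal.toReal_ofReal hγ0, ENNReal.toReal_ofReal (by linarith : (0:ℝ) ≤ 1 - γ),
      smul_eq_mul, smul_eq_mul]
  refine ⟨μ, ?_, ?_, hint _, ?_, hint _, ?_⟩
  · constructor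
    rw [hμ]
    simp only [Measure.add_apply, Measure.smul_apply, smul_eq_mul, measure_univ, mul_one]
    rw [← ENNReal.ofReal_add hγ0 (by linarith)]
    norm_num
  · have hms : MeasurableSet {x : ℝ | x < 0} := measurableSet_lt measurable_id measurable_const
    have h₁ : Measure.dirac z₁ {x : ℝ | x < 0} = 0 := by
      rw [Measure.dirac_apply' _ hms]
      exact Set.indicator_of_notMem (by simpa using not_lt.mpr hz₁) _
    have h₂ : Measure.dirac z₂ {x : ℝ | x < 0} = 0 := by
      rw [Measure.dirac_apply' _ hms]
      exact Set.indicator_of_notMem (by simpa using not_lt.mpr hz₂) _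
    rw [hμ]
    simp [Measure.add_apply, Measure.smul_apply, h₁, h₂]
  · rw [hI (fun x => x)]; exact hcomb
  · rw [hI F]

/-- Two-point reduction (Part III of the proof of Theorem 2): for `F : [0,∞) → ℝ` Borel
measurable and bounded below, the infimum of `∫ F dμ` over Borel probability measures `μ`
on `[0,∞)` with mean `1` and `F` `μ`-integrable equals the infimum of
`γ F(z₁) + (1−γ) F(z₂)` over `γ ∈ [0,1]`, `z₁, z₂ ≥ 0` with `γ z₁ + (1−γ) z₂ = 1`. -/
theorem two_point_support_reduction (F : ℝ → ℝ) (hF : Measurable F)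
    (hbd : ∃ c : ℝ, ∀ x : ℝ, 0 ≤ x → c ≤ F x) :
    sInf {v : ℝ | ∃ μ : Measure ℝ, IsProbabilityMeasure μ ∧ μ {x : ℝ | x < 0} = 0 ∧
        Integrable (fun x : ℝ => x) μ ∧ (∫ x, x ∂μ) = 1 ∧
        Integrable F μ ∧ v = ∫ x, F x ∂μ}
      = sInf {v : ℝ | ∃ γ ∈ Set.Icc (0:ℝ) 1, ∃ z₁ ∈ Set.Ici (0:ℝ), ∃ z₂ ∈ Set.Ici (0:ℝ),
        γ * z₁ + (1 - γ) * z₂ = 1 ∧ v = γ * F z₁ + (1 - γ) * F z₂} := by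
  obtain ⟨c, hc⟩ := hbd
  have hRL : {v : ℝ | ∃ γ ∈ Set.Icc (0:ℝ) 1, ∃ z₁ ∈ Set.Ici (0:ℝ), ∃ z₂ ∈ Set.Ici (0:ℝ),
        γ * z₁ + (1 - γ) * z₂ = 1 ∧ v = γ * F z₁ + (1 - γ) * F z₂} ⊆
      {v : ℝ | ∃ μ : Measure ℝ, IsProbabilityMeasure μ ∧ μ {x : ℝ | x < 0} = 0 ∧
        Integrable (fun x : ℝ => x) μ ∧ (∫ x, x ∂μ) = 1 ∧
        Integrable F μ ∧ v = ∫ x, F x ∂μ} := by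
    rintro v ⟨γ, ⟨hγ0, hγ1⟩, z₁, hz₁, z₂, hz₂, hcomb, rfl⟩
    obtain ⟨μ, h1, h2, h3, h4, h5, h6⟩ := two_point_measure F hγ0 hγ1 hz₁ hz₂ hcomb
    exact ⟨μ, h1, h2, h3, h4, h5, h6⟩
  have hRne : Set.Nonempty {v : ℝ | ∃ γ ∈ Set.Icc (0:ℝ) 1, ∃ z₁ ∈ Set.Ici (0:ℝ),
      ∃ z₂ ∈ Set.Ici (0:ℝ), γ * z₁ + (1 - γ) * z₂ = 1 ∧ v = γ * F z₁ + (1 - γ) * F z₂} :=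
    ⟨F 1, 1, ⟨zero_le_one, le_refl 1⟩, 1, Set.mem_Ici.mpr zero_le_one, 0, Set.self_mem_Ici, by ring, by ring⟩
  have hLlb : ∀ v ∈ {v : ℝ | ∃ μ : Measure ℝ, IsProbabilityMeasure μ ∧
      μ {x : ℝ | x < 0} = 0 ∧ Integrable (fun x : ℝ => x) μ ∧ (∫ x, x ∂μ) = 1 ∧
      Integrable F μ ∧ v = ∫ x, F x ∂μ}, c ≤ v := by
    rintro v ⟨μ, hprob, hneg, hintx, hmean, hintF, rfl⟩
    haveI := hprob
    have hae : ∀ᵐ x ∂μ, 0 ≤ x := by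
      rw [ae_iff]; simpa only [not_le] using hneg
    calc c = ∫ _, c ∂μ := by rw [integral_const]; simp
      _ ≤ ∫ x, F x ∂μ :=
        integral_mono_ae (integrable_const c) hintF (hae.mono fun x hx => hc x hx)
  have hLbdd : BddBelow {v : ℝ | ∃ μ : Measure ℝ, IsProbabilityMeasure μ ∧
      μ {x : ℝ | x < 0} = 0 ∧ Integrable (fun x : ℝ => x) μ ∧ (∫ x, x ∂μ) = 1 ∧
      Integrable F μ ∧ v = ∫ x, F x ∂μ} := ⟨c, hLlb⟩
  refine le_antisymm (csInf_le_csInf hLbdd hRne hRL) ?_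
  refine le_csInf (hRne.mono hRL) ?_
  rintro v ⟨μ, hprob, hneg, hintx, hmean, hintF, rfl⟩
  haveI := hprob
  obtain ⟨b, hb⟩ := exists_support_line hc
  have hae : ∀ᵐ x ∂μ, 0 ≤ x := by
    rw [ae_iff]; simpa only [not_le] using hneg
  have hptw : ∀ᵐ x ∂μ, mEnv F 1 + b * (x - 1) ≤ F x :=
    hae.mono fun x hx => le_trans (hb x hx) (mEnv_le hc hx)
  have hint2 : Integrable (fun x : ℝ => b * (x - 1)) μ :=
    (hintx.sub (integrable_const 1)).const_mul b
  have hint1 : Integrable (fun x : ℝ => mEnv F 1 + b * (x - 1)) μ :=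
    (integrable_const _).add hint2
  have hI : ∫ x, (mEnv F 1 + b * (x - 1)) ∂μ = mEnv F 1 := by
    rw [integral_add (integrable_const _) hint2, integral_const, integral_const_mul,
      integral_sub hintx (integrable_const 1), hmean, integral_const]
    simp
  have hfin : mEnv F 1 ≤ ∫ x, F x ∂μ := by
    rw [← hI]; exact integral_mono_ae hint1 hintF hptw
  exact hfin
end

section
/- For every rate R with 0 < R < C, the one-level concatenated fountain exponent is strictly positive: E_Fc(R) > 0, where E_Fc(R) = sup over input distributions p_X, r_o ∈ [R/C, 1] and ρ ∈ [0,1] of (1−r_o)( −ρ R/r_o + E_0(ρ, p_X) [ 1 − ((1+r_o)/2) E_0(ρ, p_X) ] ). -/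
open scoped BigOperators ENNReal Classical Topology
open MeasureTheory Real Filter

section Aux

variable {X Y : Type} [Fintype X] [Fintype Y]

/-- derivative of `ρ ↦ p ^ (1/(1+ρ))` at `0`. -/
lemma hasDerivAt_base (p : ℝ) (hp : 0 ≤ p) :
    HasDerivAt (fun ρ : ℝ => p ^ (1 / (1 + ρ))) (-(p * Real.log p)) 0 := by
  rcases eq_or_lt_of_le hp with h0 | h0
  · -- p = 0 : the function is 0 near 0
    have hev : (fun ρ : ℝ => p ^ (1 / (1 + ρ))) =ᶠ[nhds (0:ℝ)] fun _ => (0:ℝ) := by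
      filter_upwards [isOpen_Ioo.mem_nhds (by norm_num : (0:ℝ) ∈ Set.Ioo (-1:ℝ) 1)] with ρ hρ
      have h1 : (0:ℝ) < 1 + ρ := by linarith [hρ.1]
      rw [← h0, Real.zero_rpow]
      positivity
    have h2 := (hasDerivAt_const (0:ℝ) (0:ℝ)).congr_of_eventuallyEq hev
    have h3 : -(p * Real.log p) = 0 := by rw [← h0]; simp
    rw [h3]; exact h2
  · have hu : HasDerivAt (fun ρ : ℝ => 1 / (1 + ρ)) (-1) 0 := by
      have h1 : HasDerivAt (fun ρ : ℝ => 1 + ρ) 1 0 := (hasDerivAt_id 0).const_add 1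
      have := h1.inv (by norm_num)
      simpa [one_div, Pi.inv_def] using this
    have := (hasDerivAt_const (0:ℝ) p).rpow hu h0
    simpa [Real.rpow_one] using this

variable (ch : DMC X Y) (q : X → ℝ)

/-- derivative of the inner sum at `0`. -/
lemma hasDerivAt_inner (y : Y) :
    HasDerivAt (fun ρ : ℝ => ∑ x, q x * ch.p x y ^ (1 / (1 + ρ)))
      (-∑ x, q x * (ch.p x y * Real.log (ch.p x y))) 0 := by
  have : HasDerivAt (fun ρ : ℝ => ∑ x, q x * ch.p x y ^ (1 / (1 + ρ)))
      (∑ x, q x * -(ch.p x y * Real.log (ch.p x y))) 0 := by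
    refine HasDerivAt.fun_sum fun x _ => ?_
    exact (hasDerivAt_base (ch.p x y) (ch.nonneg x y)).const_mul (q x)
  simpa [Finset.sum_neg_distrib, mul_neg] using this

lemma inner_at_zero (y : Y) :
    (∑ x, q x * ch.p x y ^ (1 / (1 + (0:ℝ)))) = ∑ x, q x * ch.p x y := by
  simp [Real.rpow_one]

/-- derivative of the outer term at `0`. -/
lemma hasDerivAt_outer (hq0 : ∀ x, 0 ≤ q x) (y : Y) :
    HasDerivAt (fun ρ : ℝ => (∑ x, q x * ch.p x y ^ (1 / (1 + ρ))) ^ (1 + ρ))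
      ((-∑ x, q x * (ch.p x y * Real.log (ch.p x y)))
        + (∑ x, q x * ch.p x y) * Real.log (∑ x, q x * ch.p x y)) 0 := by
  set s : ℝ := ∑ x, q x * ch.p x y with hs
  have hsnn : 0 ≤ s := Finset.sum_nonneg fun x _ => mul_nonneg (hq0 x) (ch.nonneg x y)
  rcases eq_or_lt_of_le hsnn with h0 | h0
  · -- s = 0 : everything vanishes near 0
    have hterm : ∀ x, q x * ch.p x y = 0 := by
      intro x
      have := (Finset.sum_eq_zero_iff_of_nonneg
        (fun x _ => mul_nonneg (hq0 x) (ch.nonneg x y))).mp h0.symm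
      exact this x (Finset.mem_univ x)
    have hev : (fun ρ : ℝ => (∑ x, q x * ch.p x y ^ (1 / (1 + ρ))) ^ (1 + ρ))
        =ᶠ[nhds (0:ℝ)] fun _ => (0:ℝ) := by
      filter_upwards [isOpen_Ioo.mem_nhds (by norm_num : (0:ℝ) ∈ Set.Ioo (-1:ℝ) 1)] with ρ hρ
      have h1 : (0:ℝ) < 1 + ρ := by linarith [hρ.1]
      have hin : (∑ x, q x * ch.p x y ^ (1 / (1 + ρ))) = 0 := by
        refine Finset.sum_eq_zero fun x _ => ?_
        rcases mul_eq_zero.mp (hterm x) with h | h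
        · simp [h]
        · rw [h, Real.zero_rpow (by positivity)]; ring
      rw [hin, Real.zero_rpow (ne_of_gt h1)]
    have hD : (-∑ x, q x * (ch.p x y * Real.log (ch.p x y))) + s * Real.log s = 0 := by
      have : ∀ x, q x * (ch.p x y * Real.log (ch.p x y)) = 0 := by
        intro x
        rcases mul_eq_zero.mp (hterm x) with h | h
        · simp [h]
        · simp [h]
      rw [Finset.sum_eq_zero fun x _ => this x, ← h0]
      simp
    rw [hD]
    exact (hasDerivAt_const (0:ℝ) (0:ℝ)).congr_of_eventuallyEq hev
  · -- s > 0
    have hg := hasDerivAt_inner ch q y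
    have hg0 : (∑ x, q x * ch.p x y ^ (1 / (1 + (0:ℝ)))) = s := inner_at_zero ch q y
    have hpos : 0 < (fun ρ : ℝ => ∑ x, q x * ch.p x y ^ (1 / (1 + ρ))) 0 := by
      simpa [hg0] using h0
    have hexp : HasDerivAt (fun ρ : ℝ => 1 + ρ) 1 0 := (hasDerivAt_id 0).const_add 1
    have := hg.rpow hexp hpos
    simpa [hg0, Real.rpow_one] using this

end Aux

section Main

variable {X Y : Type} [Fintype X] [Fintype Y]

lemma F_at_zero (ch : DMC X Y) (q : X → ℝ) (hq1 : ∑ x, q x = 1) :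
    (∑ y, (∑ x, q x * ch.p x y ^ (1 / (1 + (0:ℝ)))) ^ (1 + (0:ℝ))) = 1 := by
  have : ∀ y : Y, (∑ x, q x * ch.p x y ^ (1 / (1 + (0:ℝ)))) ^ (1 + (0:ℝ))
      = ∑ x, q x * ch.p x y := by
    intro y
    rw [inner_at_zero ch q y]
    simp [Real.rpow_one]
  rw [Finset.sum_congr rfl fun y _ => this y, Finset.sum_comm]
  calc (∑ x, ∑ y, q x * ch.p x y) = ∑ x, q x * ∑ y, ch.p x y := by
        simp [Finset.mul_sum]
    _ = 1 := by simp [ch.sum_one, hq1]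

/-- The key algebraic identity: `-F'(0) = I(q)`. -/
lemma deriv_eq_mutInfo (ch : DMC X Y) (q : X → ℝ) (hq0 : ∀ x, 0 ≤ q x) :
    -(∑ y, ((-∑ x, q x * (ch.p x y * Real.log (ch.p x y)))
        + (∑ x, q x * ch.p x y) * Real.log (∑ x, q x * ch.p x y)))
      = mutInfo ch q := by
  rw [mutInfo, Finset.sum_comm]
  rw [← Finset.sum_neg_distrib]
  refine Finset.sum_congr rfl fun y _ => ?_
  set s : ℝ := ∑ x, q x * ch.p x y with hs
  have hsnn : 0 ≤ s := Finset.sum_nonneg fun x _ => mul_nonneg (hq0 x) (ch.nonneg x y)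
  have hsplit : s * Real.log s = ∑ x, q x * ch.p x y * Real.log s := by
    rw [hs, ← Finset.sum_mul]
  have key : -((-∑ x, q x * (ch.p x y * Real.log (ch.p x y)))
      + ∑ x, q x * ch.p x y * Real.log s)
      = ∑ x, (q x * (ch.p x y * Real.log (ch.p x y)) - q x * ch.p x y * Real.log s) := by
    rw [Finset.sum_sub_distrib]; ring
  rw [hsplit, key]
  refine Finset.sum_congr rfl fun x _ => ?_
  by_cases h : q x * ch.p x y = 0
  · rcases mul_eq_zero.mp h with h' | h' <;> simp [h, h']
  · have hq : 0 < q x := lt_of_le_of_ne (hq0 x) (by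
      intro h'; exact h (by rw [← h']; ring))
    have hp : 0 < ch.p x y := lt_of_le_of_ne (ch.nonneg x y) (by
      intro h'; exact h (by rw [← h']; ring))
    have hsy : 0 < s := by
      have : q x * ch.p x y ≤ s := Finset.single_le_sum
        (fun x _ => mul_nonneg (hq0 x) (ch.nonneg x y)) (Finset.mem_univ x)
      nlinarith
    rw [if_neg h, Real.log_div (ne_of_gt hp) (ne_of_gt hsy)]
    ring

/-- The derivative of Gallager's function in `ρ` at `ρ = 0` is the mutual information. -/
lemma E0_hasDerivAt (ch : DMC X Y) (q : X → ℝ) (hq0 : ∀ x, 0 ≤ q x) (hq1 : ∑ x, q x = 1) :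
    HasDerivAt (fun ρ : ℝ => E0 ch ρ q) (mutInfo ch q) 0 := by
  have hF : HasDerivAt (fun ρ : ℝ => ∑ y, (∑ x, q x * ch.p x y ^ (1 / (1 + ρ))) ^ (1 + ρ))
      (∑ y, ((-∑ x, q x * (ch.p x y * Real.log (ch.p x y)))
        + (∑ x, q x * ch.p x y) * Real.log (∑ x, q x * ch.p x y))) 0 :=
    HasDerivAt.fun_sum fun y _ => hasDerivAt_outer ch q hq0 y
  have hlog := (hF.log (by rw [F_at_zero ch q hq1]; norm_num)).neg
  rw [F_at_zero ch q hq1, div_one, deriv_eq_mutInfo ch q hq0] at hlog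
  exact hlog

lemma E0_at_zero (ch : DMC X Y) (q : X → ℝ) (hq1 : ∑ x, q x = 1) :
    E0 ch 0 q = 0 := by
  rw [E0, F_at_zero ch q hq1, Real.log_one, neg_zero]

end Main

/-- For every `0 < R < C`, the one-level concatenated fountain exponent is strictly
positive: `E_Fc(R) > 0`. -/
theorem EFc_pos
    {X Y : Type} [Fintype X] [Fintype Y] [Nonempty X] [Nonempty Y]
    (ch : DMC X Y) (hC : 0 < capacity ch)
    (R : ℝ) (hR0 : 0 < R) (hRC : R < capacity ch) :
    0 < EFc ch R := by
  -- the set whose sup we take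
  set S := {e : ℝ | ∃ q : InputDist X, ∃ ro ∈ Set.Icc (R / capacity ch) 1,
    ∃ ρ ∈ Set.Icc (0:ℝ) 1,
    e = (1 - ro) * (-ρ * (R / ro) +
          E0 ch ρ q.1 * (1 - (1 + ro) / 2 * E0 ch ρ q.1))} with hS
  -- S is bounded above by 1
  have hbdd : BddAbove S := by
    refine ⟨1, fun e he => ?_⟩
    obtain ⟨q, ro, hro, ρ, hρ, rfl⟩ := he
    have hroc : R / capacity ch > 0 := div_pos hR0 hC
    have hro0 : 0 < ro := lt_of_lt_of_le hroc hro.1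
    have hro1 : ro ≤ 1 := hro.2
    set t := E0 ch ρ q.1
    set c := (1 + ro) / 2 with hc
    have hc2 : (1:ℝ)/2 < c := by rw [hc]; linarith
    have hinner : -ρ * (R / ro) + t * (1 - c * t) ≤ 1 := by
      have h1 : 0 ≤ ρ * (R / ro) := mul_nonneg hρ.1 (le_of_lt (div_pos hR0 hro0))
      nlinarith [sq_nonneg (2 * c * t - 1)]
    calc (1 - ro) * (-ρ * (R / ro) + t * (1 - c * t))
        ≤ (1 - ro) * 1 := by
          apply mul_le_mul_of_nonneg_left hinner; linarith
      _ ≤ 1 := by linarith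
  -- choose a good input distribution
  have hne : Nonempty (InputDist X) := by
    refine ⟨⟨fun _ => 1 / (Fintype.card X : ℝ), fun x => by positivity, ?_⟩⟩
    have : (0:ℝ) < (Fintype.card X : ℝ) := by
      exact_mod_cast Fintype.card_pos
    rw [Finset.sum_const, Finset.card_univ, nsmul_eq_mul, mul_one_div_cancel (ne_of_gt this)]
  obtain ⟨_, ⟨q, rfl⟩, hqI⟩ := exists_lt_of_lt_csSup
    (Set.range_nonempty (fun q : InputDist X => mutInfo ch q.1)) hRC
  set I := mutInfo ch q.1 with hI
  have hI0 : 0 < I := lt_trans hR0 hqI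
  -- choose ro
  set a := max (R / capacity ch) (R / I) with ha
  have ha1 : a < 1 := by
    apply max_lt
    · exact (div_lt_one hC).mpr hRC
    · exact (div_lt_one hI0).mpr hqI
  have ha0 : 0 < a := lt_of_lt_of_le (div_pos hR0 hC) (le_max_left _ _)
  set ro := (a + 1) / 2 with hro
  have hro0 : 0 < ro := by rw [hro]; linarith
  have hro1 : ro < 1 := by rw [hro]; linarith
  have hroa : a < ro := by rw [hro]; linarith
  have hroIcc : ro ∈ Set.Icc (R / capacity ch) 1 :=
    ⟨le_of_lt (lt_of_le_of_lt (le_max_left _ _) hroa), le_of_lt hro1⟩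
  -- R' < I
  set R' := R / ro with hR'
  have hR'0 : 0 < R' := div_pos hR0 hro0
  have hR'I : R' < I := by
    rw [hR', div_lt_iff₀ hro0]
    have h1 : R / I < ro := lt_of_le_of_lt (le_max_right _ _) hroa
    rw [div_lt_iff₀ hI0] at h1
    linarith [h1]
  set R'' := (R' + I) / 2 with hR''
  have hR''0 : 0 < R'' := by rw [hR'']; linarith
  have hR'R'' : R' < R'' := by rw [hR'']; linarith
  set c := (1 + ro) / 2 with hc
  have hc0 : 0 < c := by rw [hc]; linarith
  -- derivative facts
  have hD := E0_hasDerivAt ch q.1 q.2.1 q.2.2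
  have hE00 := E0_at_zero ch q.1 q.2.2
  -- slope tends to I along 𝓝[≠]0
  have hslope : Tendsto (fun ρ => E0 ch ρ q.1 / ρ) (nhdsWithin 0 {(0:ℝ)}ᶜ) (nhds I) := by
    have := hasDerivAt_iff_tendsto_slope.mp hD
    refine this.congr' ?_
    filter_upwards [self_mem_nhdsWithin] with ρ hρ
    rw [slope_def_field, hE00]
    simp only [sub_zero]
  -- continuity: E0 → 0
  have hcont : Tendsto (fun ρ => E0 ch ρ q.1) (nhds 0) (nhds 0) := by
    have := hD.continuousAt.tendsto
    rwa [hE00] at this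
  -- gather eventual facts on 𝓝[>]0
  have hmono : nhdsWithin (0:ℝ) (Set.Ioi 0) ≤ nhdsWithin 0 {(0:ℝ)}ᶜ :=
    nhdsWithin_mono 0 (fun x hx => ne_of_gt hx)
  have hev1 : ∀ᶠ ρ in nhdsWithin (0:ℝ) (Set.Ioi 0), E0 ch ρ q.1 / ρ > R'' := by
    apply hmono
    exact hslope (Ioi_mem_nhds (by linarith [hR'I] : R'' < I))
  have hev2 : ∀ᶠ ρ in nhdsWithin (0:ℝ) (Set.Ioi 0), c * E0 ch ρ q.1 < 1 - R' / R'' := by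
    have hlt : 0 < 1 - R' / R'' := by
      have : R' / R'' < 1 := (div_lt_one hR''0).mpr hR'R''
      linarith
    have : Tendsto (fun ρ => c * E0 ch ρ q.1) (nhds 0) (nhds (c * 0)) :=
      hcont.const_mul c
    rw [mul_zero] at this
    exact nhdsWithin_le_nhds (this (Iio_mem_nhds hlt))
  have hev3 : ∀ᶠ ρ in nhdsWithin (0:ℝ) (Set.Ioi 0), ρ ∈ Set.Ioc (0:ℝ) 1 := by
    have h1 : ∀ᶠ ρ in nhdsWithin (0:ℝ) (Set.Ioi 0), ρ ∈ Set.Ioi (0:ℝ) :=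
      self_mem_nhdsWithin
    have h2 : ∀ᶠ ρ in nhdsWithin (0:ℝ) (Set.Ioi 0), ρ < 1 :=
      nhdsWithin_le_nhds (Filter.Tendsto.eventually_lt_const one_pos tendsto_id)
    filter_upwards [h1, h2] with ρ hρ1 hρ2
    exact ⟨hρ1, le_of_lt hρ2⟩
  obtain ⟨ρ, hρ1, hρ2, hρ3⟩ := (hev1.and (hev2.and hev3)).exists
  obtain ⟨hρ0, hρle1⟩ := hρ3
  set t := E0 ch ρ q.1 with ht
  -- positivity of the inner expression
  have htpos : ρ * R'' < t := by
    rw [gt_iff_lt, lt_div_iff₀ hρ0] at hρ1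
    linarith [hρ1]
  have ht0 : 0 < t := lt_trans (by positivity) htpos
  have hfac : R' / R'' < 1 - c * t := by linarith [hρ2]
  have hfacpos : 0 < R' / R'' := div_pos hR'0 hR''0
  have hprod : ρ * R'' * (R' / R'') < t * (1 - c * t) := by
    apply mul_lt_mul' (le_of_lt htpos) hfac (le_of_lt hfacpos) ht0
  have hsimp : ρ * R'' * (R' / R'') = ρ * R' := by
    field_simp
  have hinner : 0 < -ρ * R' + t * (1 - c * t) := by
    rw [hsimp] at hprod; linarith
  -- the witness element
  set e := (1 - ro) * (-ρ * (R / ro) + E0 ch ρ q.1 * (1 - (1 + ro) / 2 * E0 ch ρ q.1))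
    with he
  have heS : e ∈ S := ⟨q, ro, hroIcc, ρ, ⟨le_of_lt hρ0, hρle1⟩, rfl⟩
  have hepos : 0 < e := by
    rw [he]
    apply mul_pos (by linarith)
    rw [← hR', ← hc, ← ht]
    exact hinner
  calc (0:ℝ) < e := hepos
    _ ≤ EFc ch R := le_csSup hbdd heS
end
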